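/- arXiv:1808.06438 — 6 statements merged into one kernel-verified Lean document; each statement's English description precedes it below -/
import Mathlib

section
/- Let I = (L(u,v)) ⊂ K[x_1,...,x_n] be a completely lexsegment ideal generated in degree d, where u = x_1^{a_1}···x_n^{a_n} and v = x_1^{b_1}···x_n^{b_n}, u ≥_lex v. If I has linear quotients with respect to the reverse lexicographical ordering of minimal generators induced by every ordering of variables, then I is polymatroidal. -/
/-- A monomial in `n` variables, given by its exponent vector. -/
abbrev Mon (n : ℕ) := Fin n → ℕ

/-- Total degree of a monomial. -/
def mdeg {n : ℕ} (u : Mon n) : ℕ := ∑ i, u i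

/-- The exponent vector of `x_j * (u / x_i)`. -/
def exch {n : ℕ} (u : Mon n) (i j : Fin n) : Mon n :=
  fun l => u l - (if l = i then 1 else 0) + (if l = j then 1 else 0)

/-- Membership of the monomial `w` in the monomial ideal generated by the set `G`. -/
def memI {n : ℕ} (G : Set (Mon n)) (w : Mon n) : Prop :=
  ∃ u ∈ G, ∀ l, u l ≤ w l

/-- `G` (the set of minimal generators, all of one degree) is polymatroidal: the
exchange property holds. -/
def IsPolymatroidal {n : ℕ} (G : Set (Mon n)) : Prop :=
  ∀ u ∈ G, ∀ v ∈ G, ∀ i, v i < u i → ∃ j, u j < v j ∧ memI G (exch u i j)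

/-- The (strict) lexicographic order on monomials of a common degree, induced by the
variable ordering `x_{σ 0} > x_{σ 1} > ⋯ > x_{σ (n-1)}`. -/
def lexGT {n : ℕ} (σ : Fin n → Fin n) (u v : Mon n) : Prop :=
  ∃ i, v (σ i) < u (σ i) ∧ ∀ k, k < i → u (σ k) = v (σ k)

/-- `u ≥_lex v` with respect to the variable ordering given by `σ`. -/
def lexGE {n : ℕ} (σ : Fin n → Fin n) (u v : Mon n) : Prop :=
  u = v ∨ lexGT σ u v

/-- The (strict) reverse lexicographic order on monomials of a common degree, induced by
the variable ordering `x_{σ 0} > x_{σ 1} > ⋯ > x_{σ (n-1)}`. -/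
def rlexGT {n : ℕ} (σ : Fin n → Fin n) (u v : Mon n) : Prop :=
  ∃ i, u (σ i) < v (σ i) ∧ ∀ k, i < k → u (σ k) = v (σ k)

/-- `G` has linear quotients with respect to the order `gt`: for every `u ∈ G` the colon
ideal `(v ∈ G : gt v u) : u` is generated by variables, i.e. for every `v ∈ G` with
`gt v u` there is a variable `x_i` dividing `v : u` with `x_i·u` in the ideal generated
by the `gt`-larger generators. -/
def LinQuot {n : ℕ} (G : Set (Mon n)) (gt : Mon n → Mon n → Prop) : Prop :=
  ∀ u ∈ G, ∀ v ∈ G, gt v u →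
    ∃ i, u i < v i ∧
      ∃ w ∈ G, gt w u ∧ ∀ l, w l ≤ u l + (if l = i then 1 else 0)

/-- The shadow of a set of monomials: all products of its elements with a variable. -/
def shad {n : ℕ} (T : Set (Mon n)) : Set (Mon n) :=
  {w | ∃ v ∈ T, ∃ i, w = fun l => v l + (if l = i then 1 else 0)}

/-- `T` is a lexsegment: it is an interval for the lexicographic order among the
monomials of its common degree. -/
def IsLexsegmentSet {n : ℕ} (T : Set (Mon n)) : Prop :=
  ∀ a ∈ T, ∀ b ∈ T, ∀ c : Mon n, mdeg c = mdeg a → lexGE id a c → lexGE id c b → c ∈ T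

section Aux

variable {n : ℕ}

/-- add one to coordinate `t` -/
def pmv (x : Mon n) (t : Fin n) : Mon n := fun l => x l + if l = t then 1 else 0

lemma aux_mdeg_pmv (x : Mon n) (t : Fin n) : mdeg (pmv x t) = mdeg x + 1 := by
  unfold mdeg pmv
  rw [Finset.sum_add_distrib]
  congr 1
  simp

lemma aux_GT_intro {a b : Mon n} (p : Fin n) (h : b p < a p)
    (hpre : ∀ k, k < p → a k = b k) : lexGT id a b := ⟨p, h, hpre⟩

lemma aux_GT_elim {a b : Mon n} (h : lexGT id a b) :
    ∃ p, b p < a p ∧ ∀ k, k < p → a k = b k := h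

lemma aux_GT_asymm {a b : Mon n} (h1 : lexGT id a b) (h2 : lexGT id b a) : False := by
  obtain ⟨p, hp, hp'⟩ := h1
  obtain ⟨q, hq, hq'⟩ := h2
  rcases lt_trichotomy p q with h | h | h
  · have := hq' p h; simp only [id] at *; omega
  · subst h; simp only [id] at *; omega
  · have := hp' q h; simp only [id] at *; omega

lemma aux_GT_irrefl {a : Mon n} (h : lexGT id a a) : False := aux_GT_asymm h h

lemma aux_GT_trans {a b c : Mon n} (h1 : lexGT id a b) (h2 : lexGT id b c) :
    lexGT id a c := by
  obtain ⟨p, hp, hp'⟩ := h1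
  obtain ⟨q, hq, hq'⟩ := h2
  simp only [id] at *
  rcases lt_trichotomy p q with h | h | h
  · exact ⟨p, by show c p < a p; rw [← hq' p h]; exact hp, fun k hk => (hp' k hk).trans (hq' k (hk.trans h))⟩
  · subst h; exact ⟨p, hq.trans hp, fun k hk => (hp' k hk).trans (hq' k hk)⟩
  · exact ⟨q, by show c q < a q; rw [hp' q h]; exact hq, fun k hk => (hp' k (hk.trans h)).trans (hq' k hk)⟩

lemma aux_GE_refl (a : Mon n) : lexGE id a a := Or.inl rfl

lemma aux_GE_GT_trans {a b c : Mon n} (h1 : lexGE id a b) (h2 : lexGT id b c) :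
    lexGT id a c := by
  rcases h1 with rfl | h1
  · exact h2
  · exact aux_GT_trans h1 h2

lemma aux_GT_GE_trans {a b c : Mon n} (h1 : lexGT id a b) (h2 : lexGE id b c) :
    lexGT id a c := by
  rcases h2 with rfl | h2
  · exact h1
  · exact aux_GT_trans h1 h2

lemma aux_GE_trans {a b c : Mon n} (h1 : lexGE id a b) (h2 : lexGE id b c) :
    lexGE id a c := by
  rcases h1 with rfl | h1
  · exact h2
  · exact Or.inr (aux_GT_GE_trans h1 h2)

/-- if `a ≥ b` and they agree strictly before `p`, then `b p ≤ a p`. -/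
lemma aux_GE_coord {a b : Mon n} (h : lexGE id a b) (p : Fin n)
    (hpre : ∀ k, k < p → a k = b k) : b p ≤ a p := by
  by_contra hc
  push_neg at hc
  have hgt : lexGT id b a := ⟨p, hc, fun k hk => (hpre k hk).symm⟩
  rcases h with rfl | h
  · exact aux_GT_irrefl hgt
  · exact aux_GT_asymm h hgt

/-- pointwise ≤ with equal total degree implies equality -/
lemma aux_sum_eq {f g : Mon n} (hle : ∀ l, f l ≤ g l) (hs : mdeg f = mdeg g) :
    f = g := by
  funext l
  by_contra hc
  have hlt : f l < g l := lt_of_le_of_ne (hle l) hc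
  have : mdeg f < mdeg g := by
    unfold mdeg
    exact Finset.sum_lt_sum (fun i _ => hle i) ⟨l, Finset.mem_univ l, hlt⟩
  omega

/-- a `ℕ`-valued function with total sum 1 is a delta function -/
lemma aux_one_hot (s : Mon n) (hs : mdeg s = 1) :
    ∃ l₀, s l₀ = 1 ∧ ∀ k, k ≠ l₀ → s k = 0 := by
  unfold mdeg at hs
  have hex : ∃ l₀, s l₀ ≠ 0 := by
    by_contra hc
    push_neg at hc
    rw [Finset.sum_congr rfl (fun i _ => hc i)] at hs
    simp at hs
  obtain ⟨l₀, hl₀⟩ := hex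
  have hsplit := Finset.add_sum_erase Finset.univ s (Finset.mem_univ l₀)
  have hrest : ∑ k ∈ Finset.univ.erase l₀, s k = 0 ∧ s l₀ = 1 := by
    constructor <;> omega
  refine ⟨l₀, hrest.2, fun k hk => ?_⟩
  have := (Finset.sum_eq_zero_iff).1 hrest.1 k (by simp [hk])
  exact this

/-- monotonicity of lex order under adding a fixed variable -/
lemma aux_pmv_mono {a b : Mon n} (t : Fin n) (h : lexGE id a b) :
    lexGE id (pmv a t) (pmv b t) := by
  rcases h with rfl | ⟨p, hp, hpre⟩
  · exact Or.inl rfl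
  · refine Or.inr ⟨p, ?_, fun k hk => ?_⟩
    · simp only [id, pmv] at *; omega
    · simp only [id, pmv] at *; rw [hpre k hk]

lemma aux_pmv_shift {x : Mon n} {s t : Fin n} (h : s ≤ t) :
    lexGE id (pmv x s) (pmv x t) := by
  rcases eq_or_lt_of_le h with rfl | h
  · exact Or.inl rfl
  · refine Or.inr ⟨s, ?_, fun k hk => ?_⟩
    · simp only [id, pmv]
      have : s ≠ t := ne_of_lt h
      simp [this]
    · simp only [id, pmv]
      have h1 : k ≠ s := ne_of_lt hk
      have h2 : k ≠ t := ne_of_lt (hk.trans h)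
      simp [h1, h2]

end Aux

section Perm

variable {n : ℕ}

lemma aux_perm2 (hn : 2 ≤ n) (p i : Fin n) (hpi : p ≠ i) :
    ∃ σ : Fin n → Fin n, Function.Bijective σ ∧
      σ ⟨n-1, by omega⟩ = i ∧ σ ⟨n-2, by omega⟩ = p := by
  set l1 : Fin n := ⟨n-1, by omega⟩ with hl1
  set l2 : Fin n := ⟨n-2, by omega⟩ with hl2
  have h21 : l2 ≠ l1 := by simp [hl1, hl2, Fin.ext_iff]; omega
  set e1 : Equiv.Perm (Fin n) := Equiv.swap l1 i with he1
  set p' : Fin n := e1.symm p with hp'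
  have hp1 : p' ≠ l1 := by
    intro h
    apply hpi
    rw [← e1.apply_symm_apply p, ← hp', h, he1, Equiv.swap_apply_left]
  set e2 : Equiv.Perm (Fin n) := Equiv.swap l2 p' with he2
  refine ⟨fun k => e1 (e2 k), (e2.trans e1).bijective, ?_, ?_⟩
  · show e1 (e2 l1) = i
    have : e2 l1 = l1 := Equiv.swap_apply_of_ne_of_ne h21.symm (Ne.symm hp1)
    rw [this, he1, Equiv.swap_apply_left]
  · show e1 (e2 l2) = p
    have : e2 l2 = p' := Equiv.swap_apply_left _ _
    rw [this, hp', e1.apply_symm_apply]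

lemma aux_perm3 (hn : 3 ≤ n) (p q i : Fin n) (hpq : p ≠ q) (hpi : p ≠ i) (hqi : q ≠ i) :
    ∃ σ : Fin n → Fin n, Function.Bijective σ ∧
      σ ⟨n-1, by omega⟩ = i ∧ σ ⟨n-2, by omega⟩ = q ∧ σ ⟨n-3, by omega⟩ = p := by
  obtain ⟨σ2, hbij, h1, h2⟩ := aux_perm2 (by omega) q i hqi
  obtain ⟨k3, hk3⟩ := hbij.surjective p
  have hne1 : k3 ≠ ⟨n-1, by omega⟩ := by
    intro h; rw [h, h1] at hk3; exact hpi hk3.symm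
  have hne2 : k3 ≠ ⟨n-2, by omega⟩ := by
    intro h; rw [h, h2] at hk3; exact hpq hk3.symm
  have hd1 : (⟨n-1, by omega⟩ : Fin n) ≠ ⟨n-3, by omega⟩ := by simp [Fin.ext_iff]; omega
  have hd2 : (⟨n-2, by omega⟩ : Fin n) ≠ ⟨n-3, by omega⟩ := by simp [Fin.ext_iff]; omega
  refine ⟨fun k => σ2 (Equiv.swap ⟨n-3, by omega⟩ k3 k), hbij.comp (Equiv.swap _ _).bijective, ?_, ?_, ?_⟩
  · show σ2 (Equiv.swap ⟨n-3, by omega⟩ k3 ⟨n-1, by omega⟩) = i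
    rw [Equiv.swap_apply_of_ne_of_ne hd1 (Ne.symm hne1), h1]
  · show σ2 (Equiv.swap ⟨n-3, by omega⟩ k3 ⟨n-2, by omega⟩) = q
    rw [Equiv.swap_apply_of_ne_of_ne hd2 (Ne.symm hne2), h2]
  · show σ2 (Equiv.swap ⟨n-3, by omega⟩ k3 ⟨n-3, by omega⟩) = p
    rw [Equiv.swap_apply_left, hk3]

end Perm

section GEL

variable {n : ℕ}

lemma aux_decode {a w : Mon n} (p : Fin n)
    (hle : ∀ l, w l ≤ a l + (if l = p then 1 else 0))
    (hdeg : mdeg w = mdeg a) (hne : w ≠ a) :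
    w p = a p + 1 ∧ ∃ l₀, l₀ ≠ p ∧ w l₀ + 1 = a l₀ ∧
      ∀ k, k ≠ p → k ≠ l₀ → w k = a k := by
  set s : Mon n := fun l => a l + (if l = p then 1 else 0) - w l with hs
  have h1 : ∀ l, w l + s l = a l + (if l = p then 1 else 0) := by
    intro l; have := hle l; simp only [hs]; omega
  have hsum : mdeg w + mdeg s = mdeg a + 1 := by
    unfold mdeg
    rw [← Finset.sum_add_distrib]
    have : ∑ l, (w l + s l) = ∑ l, (a l + (if l = p then 1 else 0)) :=
      Finset.sum_congr rfl (fun l _ => h1 l)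
    rw [this, Finset.sum_add_distrib]
    simp
  have hs1 : mdeg s = 1 := by omega
  obtain ⟨l₀, hl₀1, hl₀0⟩ := aux_one_hot s hs1
  have hwp : ∀ k, k ≠ l₀ → w k = a k + (if k = p then 1 else 0) := by
    intro k hk; have := h1 k; rw [hl₀0 k hk] at this; omega
  rcases eq_or_ne l₀ p with rfl | hlp
  · exfalso; apply hne; funext k
    rcases eq_or_ne k l₀ with rfl | hk
    · have := h1 k; rw [hl₀1] at this; simp at this; omega
    · have := hwp k hk; rw [if_neg hk] at this; exact this
  · have e1 : w p = a p + 1 := by have := hwp p (fun h => hlp h.symm); simpa using this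
    refine ⟨e1, l₀, hlp, ?_, fun k hk1 hk2 => ?_⟩
    · have := h1 l₀; rw [hl₀1, if_neg hlp] at this; omega
    · have := hwp k hk2; rw [if_neg hk1] at this; simpa using this

lemma aux_GEL1 {d : ℕ} {G : Set (Mon n)}
    (hLQ : ∀ σ : Fin n → Fin n, Function.Bijective σ → LinQuot G (rlexGT σ))
    (hGd : ∀ x ∈ G, mdeg x = d)
    {a g : Mon n} (ha : a ∈ G) (hg : g ∈ G) {i p : Fin n} (hip : i ≠ p)
    (hgi : g i < a i) (hexc : ∀ j, a j < g j → j = p) :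
    exch a i p ∈ G := by
  have hn : 2 ≤ n := by
    have h1 := i.2; have h2 := p.2
    have h3 : i.val ≠ p.val := fun h => hip (Fin.ext h)
    omega
  obtain ⟨σ, hσ, hσ1, hσ2⟩ := aux_perm2 hn p i (fun h => hip h.symm)
  have hrg : rlexGT σ g a := by
    refine ⟨⟨n-1, by omega⟩, by rw [hσ1]; exact hgi, fun k hk => ?_⟩
    exfalso
    have h1 : n - 1 < k.val := hk
    have := k.2
    omega
  obtain ⟨j, hj, w, hwG, hrw, hwle⟩ := hLQ σ hσ a ha g hg hrg
  have hjp : j = p := hexc j hj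
  subst hjp
  have hne : w ≠ a := by
    rintro rfl
    obtain ⟨k₀, hk₀, -⟩ := hrw
    exact absurd hk₀ (lt_irrefl _)
  obtain ⟨hwp, l₀, hl₀p, hl₀, hother⟩ :=
    aux_decode j hwle (by rw [hGd w hwG, hGd a ha]) hne
  obtain ⟨k₀, hk₀lt, hk₀after⟩ := hrw
  have hσk₀ : σ k₀ = l₀ := by
    by_contra hc
    rcases eq_or_ne (σ k₀) j with h | h
    · rw [h, hwp] at hk₀lt; omega
    · rw [hother _ h hc] at hk₀lt; omega
  have hpk : ¬ (k₀ < (⟨n-2, by omega⟩ : Fin n)) := by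
    intro hc
    have h2 := hk₀after ⟨n-2, by omega⟩ hc
    rw [hσ2] at h2
    omega
  have hk₀ne : k₀ ≠ (⟨n-2, by omega⟩ : Fin n) := by
    intro h
    rw [h, hσ2] at hσk₀
    exact hl₀p hσk₀.symm
  have hk₀val : k₀ = (⟨n-1, by omega⟩ : Fin n) := by
    apply Fin.ext
    have h1 := k₀.2
    have h2 : ¬ (k₀.val < n - 2) := hpk
    have h3 : k₀.val ≠ n - 2 := fun h => hk₀ne (Fin.ext h)
    simp only []
    omega
  have hl₀i : l₀ = i := by rw [← hσk₀, hk₀val, hσ1]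
  have hweq : w = exch a i j := by
    funext l
    simp only [exch]
    rcases eq_or_ne l i with rfl | h1
    · rw [if_pos rfl, if_neg hip, ← hl₀i]
      omega
    · rw [if_neg h1]
      rcases eq_or_ne l j with rfl | h2
      · rw [if_pos rfl, hwp]
        omega
      · rw [if_neg h2, hother l h2 (by rw [← hl₀i] at h1; exact h1)]
        omega
  rw [← hweq]
  exact hwG

set_option maxHeartbeats 1000000 in
lemma aux_GEL2 {d : ℕ} {G : Set (Mon n)}
    (hLQ : ∀ σ : Fin n → Fin n, Function.Bijective σ → LinQuot G (rlexGT σ))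
    (hGd : ∀ x ∈ G, mdeg x = d)
    {a g : Mon n} (ha : a ∈ G) (hg : g ∈ G) {i p q : Fin n}
    (hpq : p ≠ q) (hpi : p ≠ i) (hqi : q ≠ i)
    (hgi : g i < a i) (hexc : ∀ j, a j < g j → j = p ∨ j = q) :
    exch a i p ∈ G ∨ exch a i q ∈ G ∨ exch a q p ∈ G := by
  have hn : 3 ≤ n := by
    have h1 := i.2; have h2 := p.2; have h3 := q.2
    have e1 : p.val ≠ q.val := fun h => hpq (Fin.ext h)
    have e2 : p.val ≠ i.val := fun h => hpi (Fin.ext h)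
    have e3 : q.val ≠ i.val := fun h => hqi (Fin.ext h)
    omega
  obtain ⟨σ, hσ, hσ1, hσ2, hσ3⟩ := aux_perm3 hn p q i hpq hpi hqi
  have hrg : rlexGT σ g a := by
    refine ⟨⟨n-1, by omega⟩, by rw [hσ1]; exact hgi, fun k hk => ?_⟩
    exfalso
    have h1 : n - 1 < k.val := hk
    have := k.2
    omega
  obtain ⟨j, hj, w, hwG, hrw, hwle⟩ := hLQ σ hσ a ha g hg hrg
  have hne : w ≠ a := by
    rintro rfl
    obtain ⟨k₀, hk₀, -⟩ := hrw
    exact absurd hk₀ (lt_irrefl _)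
  obtain ⟨hwp, l₀, hl₀p, hl₀, hother⟩ :=
    aux_decode j hwle (by rw [hGd w hwG, hGd a ha]) hne
  obtain ⟨k₀, hk₀lt, hk₀after⟩ := hrw
  have hσk₀ : σ k₀ = l₀ := by
    by_contra hc
    rcases eq_or_ne (σ k₀) j with h | h
    · rw [h, hwp] at hk₀lt; omega
    · rw [hother _ h hc] at hk₀lt; omega
  have hweq : ∀ l₁, l₀ = l₁ → w = exch a l₁ j := by
    rintro l₁ rfl
    funext l
    simp only [exch]
    rcases eq_or_ne l l₀ with rfl | h1
    · rw [if_pos rfl, if_neg hl₀p]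
      omega
    · rw [if_neg h1]
      rcases eq_or_ne l j with rfl | h2
      · rw [if_pos rfl, hwp]
        omega
      · rw [if_neg h2, hother l h2 h1]
        omega
  rcases hexc j hj with rfl | rfl
  · -- j = p, position n-3 : l₀ ∈ {q, i}
    have hpk : ¬ (k₀ < (⟨n-3, by omega⟩ : Fin n)) := by
      intro hc
      have h2 := hk₀after ⟨n-3, by omega⟩ hc
      rw [hσ3] at h2
      omega
    have hk₀ne : k₀ ≠ (⟨n-3, by omega⟩ : Fin n) := by
      intro h
      rw [h, hσ3] at hσk₀
      exact hl₀p hσk₀.symm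
    have hk₀val : k₀ = (⟨n-1, by omega⟩ : Fin n) ∨ k₀ = (⟨n-2, by omega⟩ : Fin n) := by
      have h1 := k₀.2
      have h2 : ¬ (k₀.val < n - 3) := by rw [Fin.lt_def] at hpk; exact hpk
      have h3 : k₀.val ≠ n - 3 := by
        intro h
        exact hk₀ne (by rw [Fin.ext_iff]; exact h)
      by_cases h4 : k₀.val < n-1
      · right
        rw [Fin.ext_iff]
        show k₀.val = n - 2
        omega
      · left
        rw [Fin.ext_iff]
        show k₀.val = n - 1
        omega
    rcases hk₀val with h | h
    · have : l₀ = i := by rw [← hσk₀, h, hσ1]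
      exact Or.inl (by rw [← hweq i this]; exact hwG)
    · have : l₀ = q := by rw [← hσk₀, h, hσ2]
      exact Or.inr (Or.inr (by rw [← hweq q this]; exact hwG))
  · -- j = q, position n-2 : l₀ = i
    have hpk : ¬ (k₀ < (⟨n-2, by omega⟩ : Fin n)) := by
      intro hc
      have h2 := hk₀after ⟨n-2, by omega⟩ hc
      rw [hσ2] at h2
      omega
    have hk₀ne : k₀ ≠ (⟨n-2, by omega⟩ : Fin n) := by
      intro h
      rw [h, hσ2] at hσk₀
      exact hl₀p hσk₀.symm
    have hk₀val : k₀ = (⟨n-1, by omega⟩ : Fin n) := by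
      apply Fin.ext
      have h1 := k₀.2
      have h2 : ¬ (k₀.val < n - 2) := hpk
      have h3 : k₀.val ≠ n - 2 := fun h => hk₀ne (Fin.ext h)
      simp only []
      omega
    have : l₀ = i := by rw [← hσk₀, hk₀val, hσ1]
    exact Or.inr (Or.inl (by rw [← hweq i this]; exact hwG))


end GEL

/-- If the completely lexsegment ideal `I = (L(u,v))` has linear quotients with respect
to the reverse lexicographic ordering of its minimal generators induced by every
ordering of the variables, then `I` is polymatroidal. -/
theorem stmt_10 {n d : ℕ} (u v : Mon n) (hud : mdeg u = d) (hvd : mdeg v = d)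
    (huv : lexGE id u v)
    (G : Set (Mon n)) (hG : G = {w | mdeg w = d ∧ lexGE id u w ∧ lexGE id w v})
    (hcomplete : ∀ i : ℕ, IsLexsegmentSet (shad^[i] G))
    (hLQ : ∀ σ : Fin n → Fin n, Function.Bijective σ → LinQuot G (rlexGT σ)) :
    IsPolymatroidal G := by
  have hmem : ∀ x : Mon n, x ∈ G ↔ (mdeg x = d ∧ lexGE id u x ∧ lexGE id x v) := by
    intro x; rw [hG]; exact Iff.rfl
  have hGd : ∀ x ∈ G, mdeg x = d := fun x hx => ((hmem x).1 hx).1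
  have huG : u ∈ G := (hmem u).2 ⟨hud, aux_GE_refl u, huv⟩
  have hvG : v ∈ G := (hmem v).2 ⟨hvd, huv, aux_GE_refl v⟩
  intro a ha b hb i hib
  obtain ⟨had, hua, hav⟩ := (hmem a).1 ha
  obtain ⟨hbd, hub, hbv⟩ := (hmem b).1 hb
  have hai : 1 ≤ a i := by omega
  suffices key : ∃ j, a j < b j ∧ exch a i j ∈ G by
    obtain ⟨j, h1, h2⟩ := key
    exact ⟨j, h1, exch a i j, h2, fun l => le_refl _⟩
  -- degree of exchanges
  have hdeg_exch : ∀ (x : Mon n) (i' j' : Fin n), 1 ≤ x i' → mdeg (exch x i' j') = mdeg x := by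
    intro x i' j' hx
    have h : pmv (exch x i' j') i' = pmv x j' := by
      funext l
      simp only [pmv, exch]
      by_cases h1 : l = i' <;> by_cases h2 : l = j' <;> subst_eqs <;> simp_all <;> omega
    have h2 := congrArg mdeg h
    rw [aux_mdeg_pmv, aux_mdeg_pmv] at h2
    omega
  -- basic comparisons of exchanges with a
  have hlt_exch_a : ∀ j, j < i → lexGT id (exch a i j) a := by
    intro j hj
    have hne : j ≠ i := ne_of_lt hj
    have e1 : exch a i j j = a j + 1 := by simp [exch, hne]
    refine aux_GT_intro j (by rw [e1]; omega) ?_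
    intro k hk
    have hk1 : k ≠ i := ne_of_lt (hk.trans hj)
    have hk2 : k ≠ j := ne_of_lt hk
    simp [exch, hk1, hk2]
  have hgt_a_exch : ∀ j, i < j → lexGT id a (exch a i j) := by
    intro j hj
    have hne : i ≠ j := ne_of_lt hj
    have e1 : exch a i j i = a i - 1 := by simp [exch, hne]
    refine aux_GT_intro i (by rw [e1]; omega) ?_
    intro k hk
    have hk1 : k ≠ i := ne_of_lt hk
    have hk2 : k ≠ j := ne_of_lt (hk.trans hj)
    simp [exch, hk1, hk2]
  -- S is nonempty
  have hSne : ∃ j, a j < b j := by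
    by_contra hc
    push_neg at hc
    have h : mdeg b < mdeg a :=
      Finset.sum_lt_sum (fun l _ => hc l) ⟨i, Finset.mem_univ i, hib⟩
    omega
  have hSfne : (Finset.univ.filter (fun j => a j < b j)).Nonempty := by
    obtain ⟨j, hj⟩ := hSne
    exact ⟨j, Finset.mem_filter.2 ⟨Finset.mem_univ j, hj⟩⟩
  set jm := (Finset.univ.filter (fun j => a j < b j)).min' hSfne with hjmdef
  have hjm : a jm < b jm := (Finset.mem_filter.1 (Finset.min'_mem _ hSfne)).2
  have hminS : ∀ l, a l < b l → jm ≤ l := fun l hl =>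
    Finset.min'_le _ _ (Finset.mem_filter.2 ⟨Finset.mem_univ l, hl⟩)
  have hijm : i ≠ jm := by intro h; rw [← h] at hjm; omega
  clear_value jm
  by_cases h1 : ∃ l, l < jm ∧ b l < a l
  ·
    -- CASE: some coordinate before jm has b < a; squeeze b into b2 with unique excess jm
    classical
    set R := ∑ l ∈ Finset.univ.erase jm, min (a l) (b l) with hRdef
    set b2 : Mon n := fun l => if l = jm then d - R else min (a l) (b l) with hb2def
    have hb2l : ∀ l, l ≠ jm → b2 l = min (a l) (b l) := by
      intro l hl; simp [hb2def, hl]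
    have hb2jmv : b2 jm = d - R := by simp [hb2def]
    have hRb : R + b jm ≤ d := by
      have e1 : R ≤ ∑ l ∈ Finset.univ.erase jm, b l :=
        Finset.sum_le_sum (fun l _ => min_le_right _ _)
      have e2 := Finset.add_sum_erase Finset.univ b (Finset.mem_univ jm)
      unfold mdeg at hbd
      omega
    have hb2jm : b jm ≤ b2 jm := by rw [hb2jmv]; omega
    have hb2d : mdeg b2 = d := by
      unfold mdeg
      have e2 := Finset.add_sum_erase Finset.univ b2 (Finset.mem_univ jm)
      have e3 : ∑ l ∈ Finset.univ.erase jm, b2 l = R := by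
        rw [hRdef]
        refine Finset.sum_congr rfl (fun l hl => ?_)
        exact hb2l l (Finset.ne_of_mem_erase hl)
      rw [← e2, e3, hb2jmv]
      omega
    have hb2a : lexGT id a b2 := by
      have hDne : (Finset.univ.filter (fun l => l < jm ∧ b l < a l)).Nonempty := by
        obtain ⟨l, hl1, hl2⟩ := h1
        exact ⟨l, Finset.mem_filter.2 ⟨Finset.mem_univ l, hl1, hl2⟩⟩
      set q := (Finset.univ.filter (fun l => l < jm ∧ b l < a l)).min' hDne with hqdef
      have hq : q < jm ∧ b q < a q := (Finset.mem_filter.1 (Finset.min'_mem _ hDne)).2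
      refine aux_GT_intro q ?_ ?_
      · rw [hb2l q (ne_of_lt hq.1)]
        have := hq.2
        omega
      · intro k hk
        have hkjm : k < jm := hk.trans hq.1
        have hk1 : ¬ (a k < b k) := fun hc => absurd hkjm (not_lt.2 (hminS k hc))
        have hk2 : ¬ (b k < a k) := by
          intro hc
          have : q ≤ k := Finset.min'_le _ _
            (Finset.mem_filter.2 ⟨Finset.mem_univ k, hkjm, hc⟩)
          omega
        rw [hb2l k (ne_of_lt hkjm)]
        omega
    have hb2b : lexGE id b2 b := by
      rcases eq_or_ne (b2 jm) (b jm) with heq | hne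
      · left
        refine aux_sum_eq (fun l => ?_) (by rw [hb2d, hbd])
        rcases eq_or_ne l jm with rfl | hl
        · omega
        · rw [hb2l l hl]; exact min_le_right _ _
      · right
        refine aux_GT_intro jm (by omega) ?_
        intro k hk
        have hk1 : ¬ (a k < b k) := fun hc => absurd hk (not_lt.2 (hminS k hc))
        rw [hb2l k (ne_of_lt hk)]
        omega
    have hb2G : b2 ∈ G :=
      (hmem b2).2 ⟨hb2d, Or.inr (aux_GE_GT_trans hua hb2a), aux_GE_trans hb2b hbv⟩
    have hb2i : b2 i < a i := by
      rw [hb2l i hijm]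
      omega
    have hexc : ∀ j, a j < b2 j → j = jm := by
      intro j hj
      by_contra hc
      rw [hb2l j hc] at hj
      omega
    exact ⟨jm, hjm, aux_GEL1 hLQ hGd ha hb2G hijm hb2i hexc⟩
  · push_neg at h1
    have hpre : ∀ l, l < jm → a l = b l := by
      intro l hl
      have h2 := h1 l hl
      have h3 : ¬ (a l < b l) := fun hc => absurd hl (not_lt.2 (hminS l hc))
      omega
    have hjmi : jm < i := by
      have h2 : ¬ i < jm := fun h => by have := hpre i h; omega
      exact lt_of_le_of_ne (not_lt.1 h2) (Ne.symm hijm)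
    by_cases h2 : ∃ j2, a j2 < b j2 ∧ i < j2
    ·
      obtain ⟨j2, hj2S, hij2⟩ := h2
      have hn1 : 0 < n := i.pos
      have hjmj2 : jm ≠ j2 := ne_of_lt (hjmi.trans hij2)
      have hjmine : jm ≠ i := Ne.symm hijm
      have hj2i : j2 ≠ i := (ne_of_lt hij2).symm
      have hij2ne : i ≠ j2 := ne_of_lt hij2
      set w1 : Mon n := fun l =>
        a l + (if l = jm then 1 else 0) + (if l = j2 then 1 else 0)
          - (if l = i then 1 else 0) with hw1def
      have hw1l : ∀ l, w1 l = a l + (if l = jm then 1 else 0) + (if l = j2 then 1 else 0)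
          - (if l = i then 1 else 0) := fun l => rfl
      have hw1i : w1 i = a i - 1 := by rw [hw1l]; simp [hijm, hij2ne]
      have hw1jm : w1 jm = a jm + 1 := by rw [hw1l]; simp [hjmj2, hjmine]
      clear_value w1
      have hw1deg : mdeg w1 = d + 1 := by
        have hpp : pmv w1 i = pmv (pmv a jm) j2 := by
          funext l
          simp only [pmv]
          rcases eq_or_ne l jm with rfl | e1
          · rw [hw1jm]; simp [hjmine, hjmj2]
          rcases eq_or_ne l j2 with rfl | e2
          · rw [hw1l]; simp [Ne.symm hjmj2, hj2i]
          rcases eq_or_ne l i with rfl | e3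
          · rw [hw1i]; simp [hijm, hij2ne]; omega
          · rw [hw1l]; simp [e1, e2, e3]
        have h2d := congrArg mdeg hpp
        rw [aux_mdeg_pmv, aux_mdeg_pmv, aux_mdeg_pmv, had] at h2d
        omega
      have hupper : lexGE id (pmv u ⟨0, hn1⟩) w1 := by
        have e1 : lexGT id (pmv a jm) w1 := by
          refine aux_GT_intro i ?_ ?_
          · rw [hw1i]
            simp only [pmv]
            rw [if_neg hijm]
            omega
          · intro k hk
            have hk1 : k ≠ i := ne_of_lt hk
            have hk2 : k ≠ j2 := ne_of_lt (hk.trans hij2)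
            by_cases hk3 : k = jm <;> simp [pmv, hw1l, hk1, hk2, hk3, hjmj2, hjmine]
        have e2 := aux_pmv_mono jm hua
        have e3 : lexGE id (pmv u ⟨0, hn1⟩) (pmv u jm) :=
          aux_pmv_shift (by rw [Fin.le_def]; exact Nat.zero_le _)
        exact aux_GE_trans e3 (aux_GE_trans e2 (Or.inr e1))
      have hjmval : jm.val < n - 1 := by
        have e1 : jm.val < i.val := hjmi
        have e2 : i.val < j2.val := hij2
        have e3 := j2.2
        omega
      have hnn : n - 1 < n := by omega
      set lst : Fin n := ⟨n-1, hnn⟩ with hlstdef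
      have hlstval : lst.val = n - 1 := by rw [hlstdef]
      clear_value lst
      have hlower : lexGE id w1 (pmv v lst) := by
        have e4 : lexGT id w1 (pmv a lst) := by
          refine aux_GT_intro jm ?_ ?_
          · have hlast : jm ≠ lst := Fin.ne_of_val_ne (by omega)
            rw [hw1jm]
            simp [pmv, hlast]
          · intro k hk
            have hk1 : k ≠ jm := ne_of_lt hk
            have hk2 : k ≠ i := ne_of_lt (hk.trans hjmi)
            have hk3 : k ≠ j2 := ne_of_lt ((hk.trans hjmi).trans hij2)
            have hkv : k.val < jm.val := hk
            have hk4 : k ≠ lst := Fin.ne_of_val_ne (by omega)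
            simp [pmv, hw1l, hk1, hk2, hk3, hk4]
        exact Or.inr (aux_GT_GE_trans e4 (aux_pmv_mono _ hav))
      have hsh := hcomplete 1
      rw [Function.iterate_one] at hsh
      have hw1shad : w1 ∈ shad G := by
        refine hsh (pmv u ⟨0, hn1⟩) ⟨u, huG, ⟨0, hn1⟩, rfl⟩
          (pmv v lst) ⟨v, hvG, lst, rfl⟩ w1 ?_ hupper hlower
        rw [hw1deg, aux_mdeg_pmv, hud]
      obtain ⟨g, hgG, t, hwt⟩ := hw1shad
      have hwt' : ∀ l, w1 l = g l + (if l = t then 1 else 0) := fun l => congrFun hwt l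
      rcases eq_or_ne t jm with ht1 | ht1
      · rw [ht1] at hwt'
        have hgeq : g = exch a i j2 := by
          funext l
          have e0 := hwt' l
          rw [hw1l] at e0
          simp only [exch]
          rcases eq_or_ne l jm with hl | e1
          · rw [hl] at e0 ⊢
            simp [hjmj2, hjmine] at e0 ⊢
            omega
          rcases eq_or_ne l j2 with hl | e2
          · rw [hl] at e0 ⊢
            simp [Ne.symm hjmj2, hj2i] at e0 ⊢
            omega
          rcases eq_or_ne l i with hl | e3
          · rw [hl] at e0 ⊢
            simp [hijm, hij2ne, hjmine] at e0 ⊢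
            omega
          · simp [e1, e2, e3] at e0 ⊢
            omega
        exact ⟨j2, hj2S, hgeq ▸ hgG⟩
      · rcases eq_or_ne t j2 with ht2 | ht2
        · rw [ht2] at hwt'
          have hgeq : g = exch a i jm := by
            funext l
            have e0 := hwt' l
            rw [hw1l] at e0
            simp only [exch]
            rcases eq_or_ne l j2 with hl | e1
            · rw [hl] at e0 ⊢
              simp [Ne.symm hjmj2, hj2i] at e0 ⊢
              omega
            rcases eq_or_ne l jm with hl | e2
            · rw [hl] at e0 ⊢
              simp [hjmj2, hjmine, Ne.symm hjmj2] at e0 ⊢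
              omega
            rcases eq_or_ne l i with hl | e3
            · rw [hl] at e0 ⊢
              simp [hijm, hij2ne] at e0 ⊢
              omega
            · simp [e1, e2, e3] at e0 ⊢
              omega
          exact ⟨jm, hjm, hgeq ▸ hgG⟩
        · have hgi : g i < a i := by
            have e0 := hwt' i
            rw [hw1i] at e0
            rcases eq_or_ne i t with h4 | h4
            · rw [if_pos h4] at e0; omega
            · rw [if_neg h4] at e0; omega
          have hexc2 : ∀ j, a j < g j → j = jm ∨ j = j2 := by
            intro j hj
            by_contra hc
            push_neg at hc
            have e0 := hwt' j
            rw [hw1l] at e0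
            rw [if_neg hc.1, if_neg hc.2] at e0
            have hle : g j ≤ a j := by
              rcases eq_or_ne j t with h4 | h4
              · rw [if_pos h4] at e0
                rcases eq_or_ne j i with h3 | h3
                · rw [if_pos h3] at e0; omega
                · rw [if_neg h3] at e0; omega
              · rw [if_neg h4] at e0
                rcases eq_or_ne j i with h3 | h3
                · rw [if_pos h3] at e0; omega
                · rw [if_neg h3] at e0; omega
            omega
          rcases aux_GEL2 hLQ hGd ha hgG hjmj2 hjmine hj2i hgi hexc2 with hout | hout | hout
          · exact ⟨jm, hjm, hout⟩
          · exact ⟨j2, hj2S, hout⟩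
          · obtain ⟨-, hw'u, -⟩ := (hmem _).1 hout
            refine ⟨jm, hjm, (hmem _).2 ⟨hdeg_exch a i jm hai ▸ had, ?_, ?_⟩⟩
            · refine Or.inr (aux_GE_GT_trans hw'u (aux_GT_intro i ?_ ?_))
              · have e1 : exch a i jm i = a i - 1 := by simp [exch, hijm]
                have e2 : exch a j2 jm i = a i := by simp [exch, hij2ne, hijm]
                rw [e1, e2]
                omega
              · intro k hk
                have hk1 : k ≠ i := ne_of_lt hk
                have hk2 : k ≠ j2 := ne_of_lt (hk.trans hij2)
                have e1 : exch a j2 jm k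
                    = a k - (if k = j2 then 1 else 0) + (if k = jm then 1 else 0) := rfl
                have e2 : exch a i jm k
                    = a k - (if k = i then 1 else 0) + (if k = jm then 1 else 0) := rfl
                rw [e1, e2, if_neg hk1, if_neg hk2]
            · exact Or.inr (aux_GT_GE_trans (hlt_exch_a jm hjmi) hav)
    · push_neg at h2
      by_cases h3 : a jm + 1 < b jm
      · -- c = exch a i jm is strictly below b
        refine ⟨jm, hjm, (hmem _).2 ⟨hdeg_exch a i jm hai ▸ had, ?_, ?_⟩⟩
        · -- u ≥ b > c
          refine Or.inr (aux_GE_GT_trans hub (aux_GT_intro jm ?_ ?_))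
          · have e1 : exch a i jm jm = a jm + 1 := by simp [exch, Ne.symm hijm]
            rw [e1]; omega
          · intro k hk
            have hk1 : k ≠ i := ne_of_lt (hk.trans hjmi)
            have hk2 : k ≠ jm := ne_of_lt hk
            have e1 : exch a i jm k = a k := by simp [exch, hk1, hk2]
            rw [e1]
            exact (hpre k hk).symm
        · exact Or.inr (aux_GT_GE_trans (hlt_exch_a jm hjmi) hav)
      · have hbjm : b jm = a jm + 1 := by omega
        by_cases h4 : ∀ p, p ≤ jm → u p = b p
        · by_cases h5 : ∃ j, (a j < b j) ∧ j ≠ jm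
          · -- second element of S, necessarily between jm and i
            obtain ⟨j, hjS, hjne⟩ := h5
            have hji : j ≠ i := by intro h; rw [h] at hjS; omega
            have hjlt : j < i := lt_of_le_of_ne (h2 j hjS) hji
            have hjgt : jm < j := lt_of_le_of_ne (hminS j hjS) (Ne.symm hjne)
            refine ⟨j, hjS, (hmem _).2 ⟨hdeg_exch a i j hai ▸ had, ?_, ?_⟩⟩
            · -- u > exch a i j , first difference at jm
              refine Or.inr (aux_GT_intro jm ?_ ?_)
              · have e1 : u jm = b jm := h4 jm (le_refl jm)
                have hjmj : jm ≠ j := ne_of_lt hjgt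
                have e2 : exch a i j jm = a jm := by simp [exch, Ne.symm hijm, hjmj]
                rw [e2, e1]; omega
              · intro k hk
                have hk1 : k ≠ i := ne_of_lt (hk.trans hjmi)
                have hk2 : k ≠ j := ne_of_lt (hk.trans hjgt)
                have e2 : exch a i j k = a k := by simp [exch, hk1, hk2]
                rw [e2, h4 k (le_of_lt hk)]
                exact (hpre k hk).symm
            · exact Or.inr (aux_GT_GE_trans (hlt_exch_a j hjlt) hav)
          · -- S = {jm} : apply GEL1 with g = b
            push_neg at h5
            have hexc : ∀ j, a j < b j → j = jm := fun j hj => h5 j hj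
            exact ⟨jm, hjm, aux_GEL1 hLQ hGd ha hb hijm hib hexc⟩
        · -- u differs from b at or before jm
          push_neg at h4
          obtain ⟨p1, hp1a, hp1b⟩ := h4
          have hDne : (Finset.univ.filter (fun p => p ≤ jm ∧ u p ≠ b p)).Nonempty :=
            ⟨p1, Finset.mem_filter.2 ⟨Finset.mem_univ p1, hp1a, hp1b⟩⟩
          set p0 := (Finset.univ.filter (fun p => p ≤ jm ∧ u p ≠ b p)).min' hDne with hp0def
          have hp0 : p0 ≤ jm ∧ u p0 ≠ b p0 :=
            (Finset.mem_filter.1 (Finset.min'_mem _ hDne)).2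
          have hup : ∀ k, k < p0 → u k = b k := by
            intro k hk
            by_contra hc
            have : p0 ≤ k := Finset.min'_le _ _
              (Finset.mem_filter.2 ⟨Finset.mem_univ k, le_trans (le_of_lt hk) hp0.1, hc⟩)
            omega
          have hub0 : b p0 < u p0 := lt_of_le_of_ne (aux_GE_coord hub p0 hup) (Ne.symm hp0.2)
          have hcb : ∀ k, k ≤ jm → exch a i jm k = b k := by
            intro k hk
            rcases eq_or_ne k jm with hkne | hkne
            · have e1 : exch a i jm jm = a jm + 1 := by simp [exch, Ne.symm hijm]
              rw [hkne, e1, hbjm]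
            · have hklt : k < jm := lt_of_le_of_ne hk hkne
              have hk1 : k ≠ i := ne_of_lt (hklt.trans hjmi)
              have e1 : exch a i jm k = a k := by simp [exch, hk1, hkne]
              rw [e1]
              exact hpre k hklt
          refine ⟨jm, hjm, (hmem _).2 ⟨hdeg_exch a i jm hai ▸ had, ?_, ?_⟩⟩
          · refine Or.inr (aux_GT_intro p0 ?_ ?_)
            · rw [hcb p0 hp0.1]
              exact hub0
            · intro k hk
              rw [hcb k (le_trans (le_of_lt hk) hp0.1)]
              exact hup k hk
          · exact Or.inr (aux_GT_GE_trans (hlt_exch_a jm hjmi) hav)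
end

section
/- Let u = x_1^a x_2^{d-a} and v = x_1^a x_n^{d-a} for some 0 < a ≤ d, and let I = (L(u,v)) be the ideal generated by the lexsegment between u and v. Then I = x_1^a (x_2,...,x_n)^{d-a}, and in particular I is polymatroidal. -/
lemma select {ι : Type*} [DecidableEq ι] (s : Finset ι) :
    ∀ (w : ι → ℕ) (t : ℕ), t ≤ ∑ l ∈ s, w l →
      ∃ g : ι → ℕ, (∀ l, g l ≤ w l) ∧ (∀ l, l ∉ s → g l = 0) ∧ ∑ l ∈ s, g l = t := by
  induction s using Finset.cons_induction with
  | empty =>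
      intro w t ht
      simp only [Finset.sum_empty, Nat.le_zero] at ht
      exact ⟨fun _ => 0, fun _ => Nat.zero_le _, fun _ _ => rfl, by simp [ht]⟩
  | cons i s hi ih =>
      intro w t ht
      rw [Finset.sum_cons] at ht
      obtain ⟨g, hg1, hg2, hg3⟩ := ih w (t - min t (w i)) (by omega)
      refine ⟨fun l => if l = i then min t (w i) else g l, ?_, ?_, ?_⟩
      · intro l
        by_cases h : l = i
        · subst h; simp
        · simpa [h] using hg1 l
      · intro l hl
        rw [Finset.mem_cons] at hl
        push_neg at hl
        simp [hl.1, hg2 l hl.2]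
      · have h1 : ∑ l ∈ s, (if l = i then min t (w i) else g l) = ∑ l ∈ s, g l :=
          Finset.sum_congr rfl (fun l hl => by
            have hne : l ≠ i := fun h => hi (h ▸ hl)
            simp [hne])
        rw [Finset.sum_cons, if_pos rfl, h1, hg3]
        omega


/-- For `u = x_1^a x_2^{d-a}` and `v = x_1^a x_n^{d-a}` with `0 < a ≤ d`, the lexsegment
ideal `I = (L(u,v))` equals `x_1^a (x_2,…,x_n)^{d-a}`; in particular `I` is
polymatroidal. -/
theorem stmt_11 {n d a : ℕ} (ha0 : 0 < a) (had : a ≤ d)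
    (u v : Mon (n + 2))
    (hu : u = fun l => if l = 0 then a else if l = 1 then d - a else 0)
    (hv : v = fun l => if l = 0 then a else if l = Fin.last (n + 1) then d - a else 0)
    (G : Set (Mon (n + 2))) (hG : G = {w | mdeg w = d ∧ lexGE id u w ∧ lexGE id w v}) :
    (∀ w : Mon (n + 2), memI G w ↔
        (a ≤ w 0 ∧ d - a ≤ ∑ l ∈ Finset.univ.erase 0, w l)) ∧
      IsPolymatroidal G := by
  set L : Fin (n + 2) := Fin.last (n + 1) with hL
  have h10 : (1 : Fin (n + 2)) ≠ 0 := by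
    simp [Fin.ext_iff]
  have hL0 : L ≠ 0 := by
    simp [hL, Fin.ext_iff]
  have hSum : ∀ w : Mon (n + 2), mdeg w = w 0 + ∑ l ∈ Finset.univ.erase 0, w l := by
    intro w
    rw [mdeg, ← Finset.add_sum_erase _ w (Finset.mem_univ 0)]
  have h1mem : (1 : Fin (n + 2)) ∈ Finset.univ.erase (0 : Fin (n + 2)) :=
    Finset.mem_erase.mpr ⟨h10, Finset.mem_univ _⟩
  have hLmem : L ∈ Finset.univ.erase (0 : Fin (n + 2)) :=
    Finset.mem_erase.mpr ⟨hL0, Finset.mem_univ _⟩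
  -- characterization of G
  have hchar : ∀ w : Mon (n + 2),
      w ∈ G ↔ (w 0 = a ∧ ∑ l ∈ Finset.univ.erase 0, w l = d - a) := by
    intro w
    rw [hG]
    constructor
    · rintro ⟨hdeg, hge, hle⟩
      have hw0le : w 0 ≤ a := by
        rcases hge with h | ⟨i, hlt, hk⟩
        · rw [← h, hu]; simp
        · by_cases hi : i = 0
          · subst hi
            simp only [id_eq, hu] at hlt
            simpa using hlt.le
          · have := hk 0 (Fin.pos_iff_ne_zero.mpr hi)
            simp only [id_eq, hu] at this
            simp at this
            omega
      have hw0ge : a ≤ w 0 := by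
        rcases hle with h | ⟨i, hlt, hk⟩
        · rw [h, hv]; simp
        · by_cases hi : i = 0
          · subst hi
            simp only [id_eq, hv] at hlt
            simpa using hlt.le
          · have := hk 0 (Fin.pos_iff_ne_zero.mpr hi)
            simp only [id_eq, hv] at this
            simp at this
            omega
      have hw0 : w 0 = a := le_antisymm hw0le hw0ge
      rw [hSum w, hw0] at hdeg
      exact ⟨hw0, by omega⟩
    · rintro ⟨hw0, hS⟩
      have hdeg : mdeg w = d := by rw [hSum w, hw0]; omega
      refine ⟨hdeg, ?_, ?_⟩
      · -- lexGE u w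
        by_cases hwu : w = u
        · exact Or.inl hwu.symm
        · right
          have hw1le : w 1 ≤ d - a := hS ▸ Finset.single_le_sum (fun _ _ => Nat.zero_le _) h1mem
          rcases lt_or_eq_of_le hw1le with h | h
          · refine ⟨1, ?_, ?_⟩
            · simpa [hu, h10] using h
            · intro k hk
              have hk0 : k = 0 := by
                have h1 : k.val < (1 : Fin (n+2)).val := Fin.lt_def.mp hk
                rw [Fin.val_one] at h1
                exact Fin.ext (by rw [Fin.val_zero]; omega)
              subst hk0
              simp [hu, hw0]
          · exfalso
            apply hwu
            have hrest : ∑ l ∈ (Finset.univ.erase (0 : Fin (n+2))).erase 1, w l = 0 := by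
              have := Finset.add_sum_erase _ w h1mem
              omega
            rw [Finset.sum_eq_zero_iff] at hrest
            funext l
            rw [hu]
            by_cases hl0 : l = 0
            · simp [hl0, hw0]
            · by_cases hl1 : l = 1
              · simp [hl1, h10, h]
              · have : w l = 0 := hrest l (Finset.mem_erase.mpr ⟨hl1,
                  Finset.mem_erase.mpr ⟨hl0, Finset.mem_univ _⟩⟩)
                simp [hl0, hl1, this]
      · -- lexGE w v
        by_cases hwv : w = v
        · exact Or.inl hwv
        · right
          set A : Finset (Fin (n + 2)) :=
            Finset.univ.filter (fun i => i ≠ 0 ∧ i ≠ L ∧ 0 < w i) with hA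
          rcases A.eq_empty_or_nonempty with hAe | hAn
          · exfalso
            apply hwv
            have hz : ∀ l : Fin (n + 2), l ≠ 0 → l ≠ L → w l = 0 := by
              intro l h1 h2
              by_contra h3
              have : l ∈ A := by
                rw [hA, Finset.mem_filter]
                exact ⟨Finset.mem_univ _, h1, h2, Nat.pos_of_ne_zero h3⟩
              simp [hAe] at this
            have hrest : ∑ l ∈ (Finset.univ.erase (0 : Fin (n+2))).erase L, w l = 0 :=
              Finset.sum_eq_zero (fun l hl => by
                rw [Finset.mem_erase, Finset.mem_erase] at hl
                exact hz l hl.2.1 hl.1)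
            have hwL : w L = d - a := by
              have := Finset.add_sum_erase _ w hLmem
              omega
            funext l
            rw [hv]
            by_cases hl0 : l = 0
            · simp [hl0, hw0]
            · by_cases hlL : l = L
              · simp [hlL, hL0, hwL]
              · simp [hl0, hlL, hz l hl0 hlL]
          · have hmA := A.min'_mem hAn
            obtain ⟨-, hi0, hiL, hiw⟩ := Finset.mem_filter.mp hmA
            refine ⟨A.min' hAn, ?_, ?_⟩
            · simpa [hv, hi0, hiL] using hiw
            · intro k hk
              have hknA : k ∉ A := fun hkA => absurd (A.min'_le k hkA) (not_le.mpr hk)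
              by_cases hk0 : k = 0
              · simp [hk0, hv, hw0]
              · have hkL : k ≠ L := ne_of_lt (lt_of_lt_of_le hk (Fin.le_last _))
                have hwk : w k = 0 := by
                  by_contra h3
                  exact hknA (by
                    rw [hA, Finset.mem_filter]
                    exact ⟨Finset.mem_univ _, hk0, hkL, Nat.pos_of_ne_zero h3⟩)
                simp [hv, hk0, hkL, hwk]
  constructor
  · intro w
    constructor
    · rintro ⟨g, hg, hle⟩
      rw [hchar] at hg
      exact ⟨hg.1 ▸ hle 0, hg.2 ▸ Finset.sum_le_sum (fun l _ => hle l)⟩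
    · rintro ⟨h1, h2⟩
      obtain ⟨g, hg1, hg2, hg3⟩ := select (Finset.univ.erase (0 : Fin (n+2))) w (d - a) h2
      refine ⟨fun l => if l = 0 then a else g l, ?_, ?_⟩
      · rw [hchar]
        constructor
        · simp
        · rw [hg3.symm]
          exact Finset.sum_congr rfl (fun l hl => by
            simp [Finset.ne_of_mem_erase hl])
      · intro l
        by_cases hl : l = 0
        · simpa [hl] using h1
        · simpa [hl] using hg1 l
  · intro p hp q hq i hlt
    rw [hchar] at hp hq
    have hi0 : i ≠ 0 := by
      rintro rfl
      rw [hp.1, hq.1] at hlt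
      exact lt_irrefl _ hlt
    have hiS : i ∈ Finset.univ.erase (0 : Fin (n+2)) :=
      Finset.mem_erase.mpr ⟨hi0, Finset.mem_univ _⟩
    obtain ⟨j, hj⟩ : ∃ j, p j < q j := by
      by_contra h
      push_neg at h
      have : ∑ l ∈ Finset.univ.erase (0 : Fin (n+2)), q l
          < ∑ l ∈ Finset.univ.erase (0 : Fin (n+2)), p l :=
        Finset.sum_lt_sum (fun l _ => h l) ⟨i, hiS, hlt⟩
      omega
    have hj0 : j ≠ 0 := by
      rintro rfl
      rw [hp.1, hq.1] at hj
      exact lt_irrefl _ hj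
    have hji : j ≠ i := by
      rintro rfl
      omega
    have hjS : j ∈ (Finset.univ.erase (0 : Fin (n+2))).erase i :=
      Finset.mem_erase.mpr ⟨hji, Finset.mem_erase.mpr ⟨hj0, Finset.mem_univ _⟩⟩
    refine ⟨j, hj, exch p i j, ?_, fun l => le_refl _⟩
    rw [hchar]
    constructor
    · have h0i : (0 : Fin (n+2)) ≠ i := Ne.symm hi0
      have h0j : (0 : Fin (n+2)) ≠ j := Ne.symm hj0
      simp [exch, h0i, h0j, hp.1]
    · have e1 : ∑ l ∈ (Finset.univ.erase (0 : Fin (n+2))).erase i, exch p i j l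
          = (∑ l ∈ (Finset.univ.erase (0 : Fin (n+2))).erase i, p l) + 1 := by
        have : ∀ l ∈ (Finset.univ.erase (0 : Fin (n+2))).erase i,
            exch p i j l = p l + (if l = j then 1 else 0) := by
          intro l hl
          have : l ≠ i := Finset.ne_of_mem_erase hl
          simp [exch, this]
        rw [Finset.sum_congr rfl this, Finset.sum_add_distrib,
          Finset.sum_ite_eq' _ j (fun _ => 1), if_pos hjS]
      have e2 := Finset.add_sum_erase _ (exch p i j) hiS
      have e3 := Finset.add_sum_erase _ p hiS
      have e4 : exch p i j i = p i - 1 := by simp [exch, hji.symm]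
      have hpi : 1 ≤ p i := by omega
      have := hp.2
      omega
end

section
/- The monomial ideal I = (x_1x_3^2, x_1^2x_3, x_1x_2x_3, x_2^2x_3) ⊂ K[x_1,x_2,x_3] does not have linear quotients with respect to the reverse lexicographical ordering of the minimal generators induced by the variable ordering x_3 > x_2 > x_1. -/
/-- The monomial ideal `(x_1x_3^2, x_1^2x_3, x_1x_2x_3, x_2^2x_3)` does not have linear
quotients with respect to the reverse lexicographic ordering of the minimal generators
induced by the variable ordering `x_3 > x_2 > x_1`. -/
theorem stmt_13 :
    ¬ LinQuot ({![1,0,2], ![2,0,1], ![1,1,1], ![0,2,1]} : Set (Mon 3))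
        (rlexGT ![2, 1, 0]) := by
  intro h
  obtain ⟨i, hi, w, hw, hgt, hle⟩ :=
    h ![1,0,2] (by simp) ![0,2,1] (by simp) (by unfold rlexGT; decide)
  fin_cases i
  · simp [Matrix.cons_val_zero] at hi
  · simp only [Set.mem_insert_iff, Set.mem_singleton_iff] at hw
    rcases hw with rfl | rfl | rfl | rfl
    · revert hgt; unfold rlexGT; decide
    · have := hle 0; simp at this
    · revert hgt; unfold rlexGT; decide
    · have := hle 1; simp at this
  · simp [Matrix.cons_val_two] at hi
end

section
/- If a monomial ideal I generated in a single degree has linear quotients with respect to an ordering u_1,...,u_r of its minimal generators, then I has quotients with linear resolution with respect to that ordering: I has a linear resolution and for each j = 2,...,r the colon ideal (u_1,...,u_{j-1}) : u_j has a linear resolution. -/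
/-- The monomial of `K[x_1,…,x_n]` with exponent vector `u`. -/
noncomputable def monOf {n : ℕ} (K : Type) [Field K] (u : Mon n) :
    MvPolynomial (Fin n) K :=
  MvPolynomial.monomial (Finsupp.equivFunOnFinite.symm u) 1

/-- `I` has a linear resolution starting in degree `d`: there is an exact complex of
finite free modules `⋯ → S^{b₂} → S^{b₁} → S^{b₀} → S → S/I` whose first map is given
by homogeneous polynomials of degree `d` generating `I` and whose other differentials
are matrices with entries homogeneous of degree `1` (so the resolution is minimal and
linear, i.e. `F_i = S(-d-i)^{b_i}`). -/
def HasLinearResolution {n : ℕ} (K : Type) [Field K] (d : ℕ)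
    (I : Ideal (MvPolynomial (Fin n) K)) : Prop :=
  ∃ (b : ℕ → ℕ) (g : Fin (b 0) → MvPolynomial (Fin n) K)
    (A : ∀ i : ℕ, Matrix (Fin (b i)) (Fin (b (i + 1))) (MvPolynomial (Fin n) K)),
    (∀ j, (g j).IsHomogeneous d) ∧
    (∀ i j l, ((A i) j l).IsHomogeneous 1) ∧
    I = Ideal.span (Set.range g) ∧
    (∀ x : Fin (b 0) → MvPolynomial (Fin n) K,
      (∑ j, g j * x j = 0) ↔ ∃ y, (A 0).mulVec y = x) ∧
    (∀ i : ℕ, ∀ x : Fin (b (i + 1)) → MvPolynomial (Fin n) K,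
      ((A i).mulVec x = 0) ↔ ∃ y, (A (i + 1)).mulVec y = x)


/-!
Induction on `j`. Suppose `I` has a linear resolution `F` generated in degree `d`, `m` has
degree `d`, and the colon ideal `I : m` has a linear resolution `G` generated in degree `1`.
Multiplication by `m` lifts to a chain map `G(-d) → F`. The lifts can be taken homogeneous,
so its components are matrices of linear forms, and the mapping cone is then a linear
resolution of `I + (m)`. In degree `0` the cone is exact precisely because
`m : S ⧸ (I : m) → S ⧸ I` is injective. Linear quotients say that each colon ideal
`(u_1, …, u_{j-1}) : u_j` is generated by variables. An ideal `(x_T)` generated by variables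
has a linear resolution (its Koszul complex), by the same cone construction, since
`(x_T) : x_a = (x_T)` for `a ∉ T`.
-/

namespace Matrix

variable {R : Type*} [CommRing R]

theorem mul_eq_zero_of_exact {ι κ γ : Type*} [Fintype ι] [Fintype κ] {B : Matrix γ ι R}
    {C : Matrix ι κ R} (h : Function.Exact C.mulVec B.mulVec) : B * C = 0 := by
  classical
  ext i j
  have := congrFun ((h _).mpr ⟨Pi.single j 1, rfl⟩) i
  rwa [mulVec_mulVec, mulVec_single_one] at this

theorem exists_mul_eq_of_forall_mem_range {ι κ γ : Type*} [Fintype ι] {C : Matrix γ ι R}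
    {N : Matrix γ κ R} (hN : ∀ k, (fun j => N j k) ∈ Set.range C.mulVec) :
    ∃ M : Matrix ι κ R, C * M = N := by
  choose M hM using hN
  exact ⟨of fun i k => M k i, ext fun j k => congrFun (hM k) j⟩

theorem exists_mul_eq_of_exact {ι κ γ μ : Type*} [Fintype ι] [Fintype γ] {B : Matrix μ γ R}
    {C : Matrix γ ι R} (h : Function.Exact C.mulVec B.mulVec) {N : Matrix γ κ R}
    (hN : B * N = 0) : ∃ M : Matrix ι κ R, C * M = N :=
  exists_mul_eq_of_forall_mem_range fun k => (h _).mp <| funext fun i => by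
    simpa [mul_apply, mulVec, dotProduct] using congrFun (congrFun hN i) k

theorem exact_submatrix_equiv {ι₀ ι₁ ι₂ κ₀ κ₁ κ₂ : Type*} [Fintype ι₁] [Fintype ι₂]
    [Fintype κ₁] [Fintype κ₂] {A : Matrix ι₀ ι₁ R} {B : Matrix ι₁ ι₂ R} (e₀ : κ₀ ≃ ι₀)
    (e₁ : κ₁ ≃ ι₁) (e₂ : κ₂ ≃ ι₂) (h : Function.Exact B.mulVec A.mulVec) :
    Function.Exact (B.submatrix e₁ e₂).mulVec (A.submatrix e₀ e₁).mulVec := by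
  intro x
  have hcomp : ∀ v : ι₀ → R, v ∘ e₀ = 0 ↔ v = 0 := fun v =>
    ⟨fun hv => funext fun i => by simpa using congrFun hv (e₀.symm i), fun hv => hv ▸ rfl⟩
  rw [submatrix_mulVec_equiv, hcomp, h]
  constructor
  · rintro ⟨y, hy⟩
    exact ⟨y ∘ e₂, by ext; simp [submatrix_mulVec_equiv, Function.comp_def, hy]⟩
  · rintro ⟨y, rfl⟩
    exact ⟨y ∘ e₂.symm, by ext; simp [submatrix_mulVec_equiv]⟩

/-- `hB` is weaker than exactness of `B₁, B₀`, so that the bottom of a cone, where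
`ker B₀ ≠ im B₁`, is covered too. -/
theorem exact_fromBlocks {κ₀ κ₁ κ₂ γ₀ γ₁ γ₂ : Type*} [Fintype κ₁] [Fintype κ₂] [Fintype γ₁]
    [Fintype γ₂] {B₀ : Matrix κ₀ κ₁ R} {B₁ : Matrix κ₁ κ₂ R} {A₀ : Matrix γ₀ γ₁ R}
    {A₁ : Matrix γ₁ γ₂ R} {P₀ : Matrix γ₀ κ₁ R} {P₁ : Matrix γ₁ κ₂ R}
    (hB : ∀ x, B₀ *ᵥ x = 0 → P₀ *ᵥ x ∈ Set.range A₀.mulVec → x ∈ Set.range B₁.mulVec)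
    (hBB : B₀ * B₁ = 0) (hA : Function.Exact A₁.mulVec A₀.mulVec) (hP : A₀ * P₁ = P₀ * B₁) :
    Function.Exact (fromBlocks (-B₁) 0 P₁ A₁).mulVec (fromBlocks (-B₀) 0 P₀ A₀).mulVec := by
  intro x
  obtain ⟨x₁, x₂, rfl⟩ : ∃ x₁ x₂, x = Sum.elim x₁ x₂ := ⟨_, _, (Sum.elim_comp_inl_inr x).symm⟩
  simp only [fromBlocks_mulVec, Sum.elim_comp_inl, Sum.elim_comp_inr, zero_mulVec, add_zero,
    neg_mulVec, ← Sum.elim_zero_zero, Sum.elim_eq_iff, neg_eq_zero, Set.mem_range]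
  constructor
  · rintro ⟨hx₁, hx₂⟩
    obtain ⟨y₁, rfl⟩ := hB x₁ hx₁ ⟨-x₂, by rw [mulVec_neg, neg_eq_iff_add_eq_zero, add_comm, hx₂]⟩
    obtain ⟨y₂, hy₂⟩ := (hA (x₂ + P₁ *ᵥ y₁)).mp <| by
      rw [mulVec_add, mulVec_mulVec, hP, ← mulVec_mulVec, add_comm, hx₂]
    refine ⟨Sum.elim (-y₁) y₂, ?_⟩
    simp only [Sum.elim_comp_inl, mulVec_neg, neg_neg, Sum.elim_comp_inr, hy₂,
      neg_add_cancel_comm_assoc, and_self]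
  · rintro ⟨y, hy⟩
    obtain ⟨y₁, y₂, rfl⟩ : ∃ y₁ y₂, y = Sum.elim y₁ y₂ := ⟨_, _, (Sum.elim_comp_inl_inr y).symm⟩
    simp only [Sum.elim_comp_inl, Sum.elim_comp_inr] at hy
    obtain ⟨rfl, rfl⟩ := hy
    have hA₀A₁ : A₀ *ᵥ A₁ *ᵥ y₂ = 0 := (hA _).mpr ⟨y₂, rfl⟩
    refine ⟨?_, ?_⟩
    · rw [mulVec_neg, mulVec_mulVec, hBB, zero_mulVec, neg_zero]
    · rw [mulVec_neg, mulVec_add, hA₀A₁, mulVec_mulVec, mulVec_mulVec, hP]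
      abel

theorem mem_range_replicateRow_mulVec {ι : Type*} [Fintype ι] {g : ι → R} {v : Unit → R} :
    v ∈ Set.range (replicateRow Unit g).mulVec ↔ v () ∈ Ideal.span (Set.range g) := by
  simp only [Set.mem_range, replicateRow_mulVec_eq_const, Ideal.mem_span_range_iff_exists_fun,
    dotProduct, mul_comm (g _)]
  exact ⟨fun ⟨c, hc⟩ => ⟨c, congrFun hc ()⟩, fun ⟨c, hc⟩ => ⟨c, funext fun _ => hc⟩⟩

end Matrix

namespace MvPolynomial

variable {σ R : Type*} [CommRing R]

attribute [local instance] gradedAlgebra in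
theorem IsHomogeneous.homogeneousComponent_add_mul {p : MvPolynomial σ R} {a : ℕ}
    (hp : p.IsHomogeneous a) (b : ℕ) (q : MvPolynomial σ R) :
    homogeneousComponent (a + b) (p * q) = p * homogeneousComponent b q := by
  have h := DirectSum.coe_decompose_mul_of_left_mem_of_le (homogeneousSubmodule σ R) (b := q) hp
    (Nat.le_add_right a b)
  rwa [add_tsub_cancel_left, ← DirectSum.Decomposition.decompose'_eq,
    decomposition.decompose'_apply, decomposition.decompose'_apply] at h

theorem isHomogeneous_mul_apply {ι κ γ : Type*} [Fintype ι] {a b : ℕ}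
    {C : Matrix γ ι (MvPolynomial σ R)} {M : Matrix ι κ (MvPolynomial σ R)}
    (hC : ∀ j i, (C j i).IsHomogeneous a) (hM : ∀ i k, (M i k).IsHomogeneous b) (j : γ) (k : κ) :
    ((C * M) j k).IsHomogeneous (a + b) :=
  IsHomogeneous.sum _ _ _ fun i _ => (hC j i).mul (hM i k)

theorem exists_isHomogeneous_mul_eq {ι κ γ : Type*} [Fintype ι] {a b : ℕ}
    {C : Matrix γ ι (MvPolynomial σ R)} {N : Matrix γ κ (MvPolynomial σ R)}
    (hC : ∀ j i, (C j i).IsHomogeneous a) (hN : ∀ j k, (N j k).IsHomogeneous (a + b))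
    (hCN : ∃ M : Matrix ι κ (MvPolynomial σ R), C * M = N) :
    ∃ M : Matrix ι κ (MvPolynomial σ R), (∀ i k, (M i k).IsHomogeneous b) ∧ C * M = N := by
  obtain ⟨M, rfl⟩ := hCN
  refine ⟨Matrix.of fun i k => homogeneousComponent b (M i k),
    fun _ _ => homogeneousComponent_isHomogeneous _ _, Matrix.ext fun j k => ?_⟩
  calc (C * Matrix.of fun i k => homogeneousComponent b (M i k)) j k
      = homogeneousComponent (a + b) ((C * M) j k) := by
        simp [Matrix.mul_apply, (hC j _).homogeneousComponent_add_mul]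
    _ = (C * M) j k := by
        rw [homogeneousComponent_of_mem ((mem_homogeneousSubmodule _ _).mpr (hN j k)), if_pos rfl]

end MvPolynomial

open MvPolynomial Matrix

/-- `HasLinearResolution` with the free modules indexed by arbitrary finite types, so that
mapping cones can be formed with `⊕`. -/
structure LinearResolution {σ R : Type*} [CommRing R] (d : ℕ) (I : Ideal (MvPolynomial σ R)) where
  ι : ℕ → Type
  [fintype : ∀ i, Fintype (ι i)]
  gen : ι 0 → MvPolynomial σ R
  diff : ∀ i, Matrix (ι i) (ι (i + 1)) (MvPolynomial σ R)
  isHomogeneous_gen : ∀ j, (gen j).IsHomogeneous d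
  isHomogeneous_diff : ∀ i j k, (diff i j k).IsHomogeneous 1
  span_gen : I = Ideal.span (Set.range gen)
  exact_gen : Function.Exact (diff 0).mulVec (replicateRow Unit gen).mulVec
  exact_diff : ∀ i, Function.Exact (diff (i + 1)).mulVec (diff i).mulVec

namespace LinearResolution

attribute [instance] fintype

theorem hasLinearResolution {n d : ℕ} {K : Type} [Field K] {I : Ideal (MvPolynomial (Fin n) K)}
    (F : LinearResolution d I) : HasLinearResolution K d I := by
  let e : ∀ i, Fin (Fintype.card (F.ι i)) ≃ F.ι i := fun i => (Fintype.equivFin (F.ι i)).symm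
  refine ⟨fun i => Fintype.card (F.ι i), F.gen ∘ e 0,
    fun i => (F.diff i).submatrix (e i) (e (i + 1)), fun j => F.isHomogeneous_gen _,
    fun i j k => F.isHomogeneous_diff _ _ _, by rw [(e 0).surjective.range_comp]; exact F.span_gen,
    fun x => ?_, fun i => exact_submatrix_equiv _ _ _ (F.exact_diff i)⟩
  exact Function.const_eq_zero.symm.trans
    (exact_submatrix_equiv (Equiv.refl Unit) _ _ F.exact_gen x)

variable {σ R : Type*} [CommRing R] {d : ℕ} {I : Ideal (MvPolynomial σ R)}

def bot (d : ℕ) : LinearResolution d (⊥ : Ideal (MvPolynomial σ R)) where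
  ι _ := Empty
  gen := Empty.elim
  diff _ := Empty.elim
  isHomogeneous_gen := (Empty.elim ·)
  isHomogeneous_diff _ := (Empty.elim ·)
  span_gen := by rw [Set.range_eq_empty, Ideal.span_empty]
  exact_gen x := iff_of_true (funext fun _ => Fintype.sum_empty _) ⟨0, Subsingleton.elim _ _⟩
  exact_diff _ x := iff_of_true (Subsingleton.elim _ _) ⟨0, Subsingleton.elim _ _⟩

abbrev augIndex (F : LinearResolution d I) : ℕ → Type
  | 0 => Unit
  | i + 1 => F.ι i

instance (F : LinearResolution d I) : ∀ i, Fintype (F.augIndex i)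
  | 0 => inferInstanceAs (Fintype Unit)
  | i + 1 => inferInstanceAs (Fintype (F.ι i))

def augDiff (F : LinearResolution d I) :
    ∀ i, Matrix (F.augIndex i) (F.ι i) (MvPolynomial σ R)
  | 0 => replicateRow Unit F.gen
  | i + 1 => F.diff i

theorem exact_augDiff (F : LinearResolution d I) :
    ∀ i, Function.Exact (F.diff i).mulVec (F.augDiff i).mulVec
  | 0 => F.exact_gen
  | i + 1 => F.exact_diff i

theorem augDiff_mul_diff (F : LinearResolution d I) (i : ℕ) : F.augDiff i * F.diff i = 0 :=
  mul_eq_zero_of_exact (F.exact_augDiff i)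

theorem diff_mul_diff (F : LinearResolution d I) (i : ℕ) : F.diff i * F.diff (i + 1) = 0 :=
  mul_eq_zero_of_exact (F.exact_diff i)

theorem isHomogeneous_augDiff {J : Ideal (MvPolynomial σ R)} (F : LinearResolution 1 J) :
    ∀ i j k, (F.augDiff i j k).IsHomogeneous 1
  | 0, _, k => F.isHomogeneous_gen k
  | i + 1, j, k => F.isHomogeneous_diff i j k

section Cone

variable {m : MvPolynomial σ R} (F : LinearResolution d I)
  (G : LinearResolution 1 (I.colon (Ideal.span {m})))

theorem exists_comparison_succ (i : ℕ) (M : Matrix (F.ι i) (G.ι i) (MvPolynomial σ R))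
    (hM : ∀ j k, (M j k).IsHomogeneous 1) (hMG : F.augDiff i * M * G.diff i = 0) :
    ∃ M' : Matrix (F.ι (i + 1)) (G.ι (i + 1)) (MvPolynomial σ R),
      (∀ j k, (M' j k).IsHomogeneous 1) ∧ F.augDiff (i + 1) * M' * G.diff (i + 1) = 0 ∧
        F.diff i * M' = M * G.diff i := by
  obtain ⟨M', hM', hFM'⟩ := exists_isHomogeneous_mul_eq (F.isHomogeneous_diff i)
    (isHomogeneous_mul_apply hM (G.isHomogeneous_diff i))
    (exists_mul_eq_of_exact (F.exact_augDiff i) (by rwa [← Matrix.mul_assoc]))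
  refine ⟨M', hM', ?_, hFM'⟩
  show F.diff i * M' * G.diff (i + 1) = 0
  rw [hFM', Matrix.mul_assoc, G.diff_mul_diff, Matrix.mul_zero]

theorem exists_comparison (hm : m.IsHomogeneous d) :
    ∃ φ : ∀ i, Matrix (F.ι i) (G.ι i) (MvPolynomial σ R), (∀ i j k, (φ i j k).IsHomogeneous 1) ∧
      replicateRow Unit F.gen * φ 0 = m • replicateRow Unit G.gen ∧
      ∀ i, F.diff i * φ (i + 1) = φ i * G.diff i := by
  obtain ⟨φ₀, hφ₀, hFφ₀⟩ : ∃ M : Matrix (F.ι 0) (G.ι 0) (MvPolynomial σ R),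
      (∀ j k, (M j k).IsHomogeneous 1) ∧ replicateRow Unit F.gen * M = m • replicateRow Unit G.gen := by
    refine exists_isHomogeneous_mul_eq (fun _ => F.isHomogeneous_gen)
      (fun _ k => hm.mul (G.isHomogeneous_gen k))
      (exists_mul_eq_of_forall_mem_range fun k => mem_range_replicateRow_mulVec.mpr ?_)
    have hk : G.gen k ∈ I.colon (Ideal.span {m}) := G.span_gen.ge (Ideal.subset_span ⟨k, rfl⟩)
    rw [Matrix.smul_apply, replicateRow_apply, smul_eq_mul, mul_comm, ← F.span_gen]
    exact Ideal.mem_colon_span_singleton.mp hk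
  have hφ₀G : F.augDiff 0 * φ₀ * G.diff 0 = 0 := by
    show replicateRow Unit F.gen * φ₀ * G.diff 0 = 0
    rw [hFφ₀, Matrix.smul_mul]
    exact smul_eq_zero_of_right m (G.augDiff_mul_diff 0)
  choose next hnext hnextG hFnext using exists_comparison_succ F G
  let φ : ∀ i, {M : Matrix (F.ι i) (G.ι i) (MvPolynomial σ R) //
      (∀ j k, (M j k).IsHomogeneous 1) ∧ F.augDiff i * M * G.diff i = 0} :=
    Nat.rec ⟨φ₀, hφ₀, hφ₀G⟩ fun i M =>
      ⟨next i M.1 M.2.1 M.2.2, hnext i M.1 M.2.1 M.2.2, hnextG i M.1 M.2.1 M.2.2⟩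
  exact ⟨fun i => (φ i).1, fun i => (φ i).2.1, hFφ₀, fun i => hFnext i _ _ _⟩

/-- The mapping cone of the chain map `φ` lifting multiplication by `m` from `S ⧸ (I : m)` to
`S ⧸ I`. -/
noncomputable def cone (hm : m.IsHomogeneous d)
    (φ : ∀ i, Matrix (F.ι i) (G.ι i) (MvPolynomial σ R)) (hφ : ∀ i j k, (φ i j k).IsHomogeneous 1)
    (hφ₀ : replicateRow Unit F.gen * φ 0 = m • replicateRow Unit G.gen)
    (hφF : ∀ i, F.diff i * φ (i + 1) = φ i * G.diff i) :
    LinearResolution d (I ⊔ Ideal.span {m}) where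
  ι i := G.augIndex i ⊕ F.ι i
  gen := Sum.elim (fun _ => m) F.gen
  diff i := fromBlocks (-G.augDiff i) 0 (φ i) (F.diff i)
  isHomogeneous_gen := Sum.rec (fun _ => hm) F.isHomogeneous_gen
  isHomogeneous_diff i := by
    rintro (j | j) (k | k)
    exacts [(G.isHomogeneous_augDiff i j k).neg, isHomogeneous_zero _ _ _, hφ i j k,
      F.isHomogeneous_diff i j k]
  span_gen := by
    rw [Set.Sum.elim_range, Set.range_const, Ideal.span_union, ← F.span_gen, sup_comm]
  exact_gen := by
    -- the bottom of the cone of `φ` extended by `m : S → S` in degree `-1`; the hypothesis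
    -- `hB` of `exact_fromBlocks` is then the definition of `I : m`
    have h := exact_fromBlocks (B₀ := (0 : Matrix Empty Unit (MvPolynomial σ R)))
      (P₀ := m • 1) (A₀ := replicateRow Unit F.gen) (B₁ := G.augDiff 0) (A₁ := F.diff 0)
      (P₁ := φ 0) ?_ (Matrix.zero_mul _) F.exact_gen
      (by rw [hφ₀, Matrix.smul_mul, Matrix.one_mul]; rfl)
    · intro (x : Unit ⊕ F.ι 0 → MvPolynomial σ R)
      refine Iff.trans ?_ (h x)
      simp only [replicateRow_mulVec_eq_const, dotProduct, Fintype.sum_sum_type,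
        Finset.univ_unique, PUnit.default_eq_unit, Sum.elim_inl, Finset.sum_singleton,
        Sum.elim_inr, funext_iff, Function.const_apply, Pi.zero_apply, forall_const, neg_zero,
        fromBlocks_mulVec, zero_mulVec, add_zero, smul_mulVec, one_mulVec, Function.comp_apply,
        Sum.forall, implies_true, Pi.add_apply, Pi.smul_apply, smul_eq_mul, true_and]
      exact ⟨fun h _ => h, fun h => h ()⟩
    · intro x _ hx
      rw [mem_range_replicateRow_mulVec, smul_mulVec, one_mulVec, ← F.span_gen] at hx
      rw [augDiff, mem_range_replicateRow_mulVec, ← G.span_gen, Ideal.mem_colon_span_singleton,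
        mul_comm]
      exact hx
  exact_diff i := exact_fromBlocks (fun x hx _ => (G.exact_augDiff i x).mp hx)
    (G.augDiff_mul_diff i) (F.exact_diff i) (hφF i)

end Cone

theorem nonempty_sup {m : MvPolynomial σ R} (F : LinearResolution d I)
    (G : LinearResolution 1 (I.colon (Ideal.span {m}))) (hm : m.IsHomogeneous d) :
    Nonempty (LinearResolution d (I ⊔ Ideal.span {m})) :=
  let ⟨φ, hφ, hφ₀, hφF⟩ := F.exists_comparison G hm
  ⟨F.cone G hm φ hφ hφ₀ hφF⟩

end LinearResolution

theorem nonempty_linearResolution_span_range_of_colon {σ R : Type*} [CommRing R] {d r : ℕ}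
    {g : Fin r → MvPolynomial σ R} (hg : ∀ j, (g j).IsHomogeneous d)
    (hcolon : ∀ j, Nonempty
      (LinearResolution 1 ((Ideal.span (g '' {k | k < j})).colon (Ideal.span {g j})))) :
    Nonempty (LinearResolution d (Ideal.span (Set.range g))) := by
  suffices h : ∀ t ≤ r, Nonempty (LinearResolution d (Ideal.span (g '' {k | (k : ℕ) < t}))) by
    simpa [← Set.image_univ] using h r le_rfl
  intro t ht
  induction t with
  | zero => simpa using ⟨LinearResolution.bot d⟩
  | succ t ih =>
    have hlt : {k : Fin r | (k : ℕ) < t + 1} = insert ⟨t, ht⟩ {k | k < ⟨t, ht⟩} := by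
      ext k
      simp only [Set.mem_ofPred_eq, Set.mem_insert_iff, Fin.ext_iff, Fin.lt_def]
      omega
    obtain ⟨F⟩ := ih (Nat.le_of_succ_le ht)
    obtain ⟨G⟩ := hcolon ⟨t, ht⟩
    rw [hlt, Set.image_insert_eq, Ideal.span_insert, sup_comm]
    exact F.nonempty_sup G (hg _)

namespace MvPolynomial

variable {σ R : Type*} [CommRing R]

theorem colon_span_X_image_of_notMem {T : Set σ} {a : σ} (ha : a ∉ T) :
    (Ideal.span (X '' T : Set (MvPolynomial σ R))).colon
      (Ideal.span {(X a : MvPolynomial σ R)}) = Ideal.span (X '' T) := by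
  ext s
  rw [Ideal.mem_colon_span_singleton]
  refine ⟨fun h => ?_, fun h => Ideal.mul_mem_right _ _ h⟩
  rw [mem_ideal_span_X_image] at h ⊢
  intro c hc
  obtain ⟨i, hiT, hi⟩ := h (c + Finsupp.single a 1) (by
    rwa [mem_support_iff, coeff_mul_X, ← mem_support_iff])
  refine ⟨i, hiT, ?_⟩
  rwa [Finsupp.add_apply, Finsupp.single_eq_of_ne (ne_of_mem_of_not_mem hiT ha), add_zero] at hi

theorem nonempty_linearResolution_span_X {T : Set σ} (hT : T.Finite) :
    Nonempty (LinearResolution 1 (Ideal.span (X '' T : Set (MvPolynomial σ R)))) := by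
  induction T, hT using Set.Finite.induction_on with
  | empty => simpa using ⟨LinearResolution.bot 1⟩
  | @insert a T ha _ ih =>
    obtain ⟨F⟩ := ih
    rw [Set.image_insert_eq, Ideal.span_insert, sup_comm]
    exact F.nonempty_sup ((colon_span_X_image_of_notMem (R := R) ha).symm ▸ F)
      (isHomogeneous_X R a)

end MvPolynomial

section Monomial

open MvPolynomial

variable {n : ℕ} (K : Type) [Field K]

theorem isHomogeneous_monOf (u : Mon n) : (monOf K u).IsHomogeneous (mdeg u) :=
  isHomogeneous_monomial _ (by simp [Finsupp.degree_eq_sum, mdeg])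

theorem mem_span_monOf_iff {G : Set (Mon n)} {p : MvPolynomial (Fin n) K} :
    p ∈ Ideal.span (monOf K '' G) ↔ ∀ c ∈ p.support, ∃ v ∈ G, ∀ l, v l ≤ c l := by
  have himage : monOf K '' G =
      (fun s => monomial s (1 : K)) '' (Finsupp.equivFunOnFinite.symm '' G) := by
    rw [Set.image_image]
    rfl
  simp only [himage, mem_ideal_span_monomial_image, Set.exists_mem_image, Finsupp.le_def,
    Finsupp.equivFunOnFinite_symm_apply_apply]

theorem X_mul_monOf (i : Fin n) (u : Mon n) :
    X i * monOf K u =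
      monomial (Finsupp.equivFunOnFinite.symm fun l => u l + if l = i then 1 else 0) 1 := by
  have hexp : Finsupp.single i 1 + Finsupp.equivFunOnFinite.symm u =
      Finsupp.equivFunOnFinite.symm fun l => u l + if l = i then 1 else 0 := by
    ext l
    simp [Finsupp.single_apply, eq_comm, add_comm]
  rw [X, monOf, monomial_mul, one_mul, hexp]

theorem colon_span_monOf {G : Set (Mon n)} {u : Mon n}
    (hG : ∀ v ∈ G, ∃ i, u i < v i ∧ ∃ w ∈ G, ∀ l, w l ≤ u l + if l = i then 1 else 0) :
    (Ideal.span (monOf K '' G)).colon (Ideal.span {monOf K u}) =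
      Ideal.span (X '' {i | ∃ w ∈ G, ∀ l, w l ≤ u l + if l = i then 1 else 0}) := by
  refine le_antisymm (fun s hs => ?_) (Ideal.span_le.mpr ?_)
  · rw [Ideal.mem_colon_span_singleton, mem_span_monOf_iff] at hs
    rw [mem_ideal_span_X_image]
    intro c hc
    obtain ⟨v, hv, hvc⟩ := hs (c + Finsupp.equivFunOnFinite.symm u) (by
      rwa [mem_support_iff, monOf, coeff_mul_monomial, mul_one, ← mem_support_iff])
    obtain ⟨i, hui, hi⟩ := hG v hv
    have hvci := hvc i
    simp only [Finsupp.add_apply, Finsupp.equivFunOnFinite_symm_apply_apply] at hvci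
    exact ⟨i, hi, by omega⟩
  · rintro _ ⟨i, ⟨w, hw, hwu⟩, rfl⟩
    rw [SetLike.mem_coe, Ideal.mem_colon_span_singleton, X_mul_monOf, mem_span_monOf_iff]
    intro c hc
    rw [Finset.mem_singleton.mp (support_monomial_subset hc)]
    exact ⟨w, hw, by simpa using hwu⟩

end Monomial

theorem stmt_14_general (K : Type) [Field K] {n d r : ℕ} (u : Fin r → Mon n)
    (hdeg : ∀ j, mdeg (u j) = d)
    (hLQ : ∀ j k : Fin r, k < j →
      ∃ i, u j i < u k i ∧
        ∃ k', k' < j ∧ ∀ l, u k' l ≤ u j l + (if l = i then 1 else 0)) :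
    HasLinearResolution K d (Ideal.span (Set.range fun j => monOf K (u j))) ∧
    ∀ j : Fin r, (0 : ℕ) < (j : ℕ) →
      HasLinearResolution K 1
        (Submodule.colon
          (Ideal.span ((fun k => monOf K (u k)) '' {k | k < j}))
          (Ideal.span {monOf K (u j)})) := by
  have hcolon : ∀ j : Fin r, Nonempty (LinearResolution 1
      ((Ideal.span ((fun k => monOf K (u k)) '' {k | k < j})).colon
        (Ideal.span {monOf K (u j)}))) := fun j => by
    rw [← Set.image_image, colon_span_monOf]
    · exact nonempty_linearResolution_span_X (Set.toFinite _)
    · rintro _ ⟨k, hk, rfl⟩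
      obtain ⟨i, hi, k', hk', hle⟩ := hLQ j k hk
      exact ⟨i, hi, u k', ⟨k', hk', rfl⟩, hle⟩
  have hI := nonempty_linearResolution_span_range_of_colon
    (fun j => hdeg j ▸ isHomogeneous_monOf K (u j)) hcolon
  exact ⟨hI.some.hasLinearResolution, fun j _ => (hcolon j).some.hasLinearResolution⟩

/-- If a monomial ideal generated in a single degree has linear quotients with respect
to the ordering `u_1, …, u_r` of its minimal generators, then it has quotients with
linear resolution with respect to that ordering: `I` has a linear resolution and each
colon ideal `(u_1,…,u_{j-1}) : u_j` has a linear resolution (being generated by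
variables, i.e. in degree `1`). -/
theorem stmt_14 (K : Type) [Field K] {n d r : ℕ} (u : Fin r → Mon n)
    (hinj : Function.Injective u) (hdeg : ∀ j, mdeg (u j) = d)
    (hLQ : ∀ j k : Fin r, k < j →
      ∃ i, u j i < u k i ∧
        ∃ k', k' < j ∧ ∀ l, u k' l ≤ u j l + (if l = i then 1 else 0)) :
    HasLinearResolution K d (Ideal.span (Set.range fun j => monOf K (u j))) ∧
    ∀ j : Fin r, (0 : ℕ) < (j : ℕ) →
      HasLinearResolution K 1
        (Submodule.colon
          (Ideal.span ((fun k => monOf K (u k)) '' {k | k < j}))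
          (Ideal.span {monOf K (u j)})) :=
  stmt_14_general K u hdeg hLQ
end

section
/- Every polymatroidal ideal satisfies the symmetric exchange property: for u,v ∈ G(I) with deg_{x_i}(v) > deg_{x_i}(u), there exists j with deg_{x_j}(v) < deg_{x_j}(u) such that both x_i(u/x_j) ∈ G(I) and x_j(v/x_i) ∈ G(I). -/
/-! Polarization replaces the monomial `x^u` by the squarefree set
`{(l, t) | t < u l}` of `Fin n × ℕ`. For a polymatroidal `G` of common degree `d` the
polarizations of the elements of `G` are the bases of a matroid: the exchange property of `G`
lifts directly. In a matroid, the fundamental circuit of `x` with respect to one base and the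
fundamental cocircuit of `x` with respect to another meet in some `y ≠ x`, which is exchangeable
with `x` in both directions; depolarizing this symmetric exchange gives the theorem. -/

open Set

theorem Matroid.IsBase.exists_symm_exchange {α : Type*} {M : Matroid α} {A B : Set α} {x : α}
    (hA : M.IsBase A) (hB : M.IsBase B) (hx : x ∈ A \ B) :
    ∃ y ∈ B \ A, M.IsBase (insert y (A \ {x})) ∧ M.IsBase (insert x (B \ {y})) := by
  have hxE : x ∈ M.E := hA.subset_ground hx.1
  have hC := hB.fundCircuit_isCircuit hxE hx.2
  have hK := hA.compl_closure_sdiff_singleton_isCocircuit hx.1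
  have hxK : x ∈ M.E \ M.closure (A \ {x}) := ⟨hxE, hA.indep.notMem_closure_sdiff_of_mem hx.1⟩
  obtain ⟨y, ⟨hyC, hyE, hycl⟩, hyx⟩ :=
    (hC.isCocircuit_inter_nontrivial hK ⟨x, M.mem_fundCircuit x B, hxK⟩).exists_ne x
  have hyB : y ∈ B := by simpa [hyx] using M.fundCircuit_subset_insert x B hyC
  have hyA : y ∉ A := fun hyA ↦
    hycl (M.subset_closure _ (sdiff_subset.trans hA.subset_ground) ⟨hyA, hyx⟩)
  refine ⟨y, ⟨hyB, hyA⟩, hA.exchange_base_of_notMem_closure hx.1 hycl, ?_⟩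
  have hind := (hB.indep.mem_fundCircuit_iff (by rwa [hB.closure_eq]) hx.2).1 hyC
  rw [← insert_sdiff_singleton_comm hyx.symm] at hind
  exact hB.exchange_isBase_of_indep hx.2 hind

section Monomial

variable {n d : ℕ}

lemma exch_self {u : Mon n} {i : Fin n} (hu : 1 ≤ u i) : exch u i i = u := by
  funext l
  simp only [exch]
  split_ifs with h
  · subst h; omega
  · omega

lemma mdeg_exch {u : Mon n} {i : Fin n} (j : Fin n) (hu : 1 ≤ u i) :
    mdeg (exch u i j) = mdeg u := by
  have hle : u i ≤ mdeg u :=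
    Finset.single_le_sum (fun l _ ↦ Nat.zero_le (u l)) (Finset.mem_univ i)
  have hsub : ∀ l ∈ Finset.univ, (if l = i then 1 else 0) ≤ u l := by
    intro l _
    split_ifs with h
    · exact h ▸ hu
    · exact Nat.zero_le _
  simp only [mdeg, exch, Finset.sum_add_distrib, Finset.sum_tsub_distrib _ hsub,
    Finset.sum_ite_eq', Finset.mem_univ, if_true] at hle ⊢
  omega

lemma mem_of_memI_of_mdeg_eq {G : Set (Mon n)} (hdeg : ∀ u ∈ G, mdeg u = d) {w : Mon n}
    (hw : mdeg w = d) (h : memI G w) : w ∈ G := by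
  obtain ⟨u, hu, hle⟩ := h
  have hsum : ∑ l, u l = ∑ l, w l := (hdeg u hu).trans hw.symm
  have heq : u = w :=
    funext fun l ↦ (Finset.sum_eq_sum_iff_of_le fun l _ ↦ hle l).1 hsum l (Finset.mem_univ l)
  exact heq ▸ hu

end Monomial

section Polarization

variable {n d : ℕ}

def polarize (u : Mon n) : Finset (Fin n × ℕ) :=
  Finset.univ.biUnion fun l ↦ {l} ×ˢ Finset.range (u l)

def depolarize (F : Finset (Fin n × ℕ)) : Mon n :=
  fun l ↦ (F.filter fun p ↦ p.1 = l).card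

@[simp]
lemma mem_polarize {u : Mon n} {p : Fin n × ℕ} : p ∈ polarize u ↔ p.2 < u p.1 := by
  simp [polarize, Prod.ext_iff, eq_comm]

@[simp]
lemma depolarize_polarize (u : Mon n) : depolarize (polarize u) = u := by
  funext l
  have h : (polarize u).filter (fun p ↦ p.1 = l) = {l} ×ˢ Finset.range (u l) := by
    ext ⟨a, t⟩
    simp only [Finset.mem_filter, mem_polarize, Finset.mem_product, Finset.mem_singleton,
      Finset.mem_range]
    constructor
    · rintro ⟨ht, rfl⟩; exact ⟨rfl, ht⟩
    · rintro ⟨rfl, ht⟩; exact ⟨ht, rfl⟩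
  simp [depolarize, h]

lemma depolarize_insert_erase {F : Finset (Fin n × ℕ)} {x y : Fin n × ℕ} (hx : x ∈ F)
    (hy : y ∉ F) : depolarize (insert y (F.erase x)) = exch (depolarize F) x.1 y.1 := by
  funext l
  have hy' : y ∉ F.erase x := fun h ↦ hy (Finset.mem_of_mem_erase h)
  have hsum := Finset.add_sum_erase F (fun p ↦ if p.1 = l then 1 else 0) hx
  simp only [depolarize, exch, Finset.card_filter, Finset.sum_insert hy'] at hsum ⊢
  split_ifs at hsum ⊢ <;> grind

lemma depolarize_erase_add_one {F : Finset (Fin n × ℕ)} {x : Fin n × ℕ} (hx : x ∈ F) :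
    depolarize (F.erase x) x.1 + 1 = depolarize F x.1 := by
  simp only [depolarize, Finset.filter_erase]
  exact Finset.card_erase_add_one (Finset.mem_filter.2 ⟨hx, rfl⟩)

lemma exists_mem_sdiff_of_depolarize_lt {F F' : Finset (Fin n × ℕ)} {j : Fin n}
    (h : depolarize F j < depolarize F' j) : ∃ b ∈ F', b ∉ F ∧ b.1 = j := by
  by_contra! hcon
  have hsub : F'.filter (fun p ↦ p.1 = j) ⊆ F.filter (fun p ↦ p.1 = j) := by
    intro b hb
    obtain ⟨hbF', hbj⟩ := Finset.mem_filter.1 hb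
    exact Finset.mem_filter.2 ⟨by_contra fun hbF ↦ hcon b hbF' hbF hbj, hbj⟩
  exact (Finset.card_le_card hsub).not_gt h

def polarBases (G : Set (Mon n)) (B : Set (Fin n × ℕ)) : Prop :=
  ∃ F : Finset (Fin n × ℕ), ↑F = B ∧ depolarize F ∈ G

lemma polarBases_coe_iff {G : Set (Mon n)} {F : Finset (Fin n × ℕ)} :
    polarBases G ↑F ↔ depolarize F ∈ G :=
  ⟨fun ⟨_, hF', h⟩ ↦ Finset.coe_injective hF' ▸ h, fun h ↦ ⟨F, rfl, h⟩⟩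

lemma IsPolymatroidal.exchangeProperty_polarBases {G : Set (Mon n)}
    (hdeg : ∀ u ∈ G, mdeg u = d) (hpoly : IsPolymatroidal G) :
    Matroid.ExchangeProperty (polarBases G) := by
  rintro _ _ ⟨F, rfl, hF⟩ ⟨F', rfl, hF'⟩ a ⟨haF, haF'⟩
  suffices ∃ b ∈ F', b ∉ F ∧ exch (depolarize F) a.1 b.1 ∈ G by
    obtain ⟨b, hbF', hbF, hb⟩ := this
    refine ⟨b, ⟨hbF', hbF⟩, ?_⟩
    rw [← Finset.coe_erase, ← Finset.coe_insert, polarBases_coe_iff,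
      depolarize_insert_erase haF hbF]
    exact hb
  have hua := depolarize_erase_add_one haF
  rcases lt_or_ge (depolarize F' a.1) (depolarize F a.1) with hlt | hle
  · obtain ⟨j, hj, hmem⟩ := hpoly _ hF _ hF' a.1 hlt
    obtain ⟨b, hbF', hbF, rfl⟩ := exists_mem_sdiff_of_depolarize_lt hj
    refine ⟨b, hbF', hbF, mem_of_memI_of_mdeg_eq hdeg ?_ hmem⟩
    rw [mdeg_exch _ (by omega), hdeg _ hF]
  · -- `F'` has at least as many copies of `x_{a.1}`, so one of them replaces `a` and the
    -- monomial does not change.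
    obtain ⟨b, hbF', hbF, hb⟩ :=
      exists_mem_sdiff_of_depolarize_lt (F := F.erase a) (F' := F') (j := a.1) (by omega)
    have hba : b ≠ a := ne_of_mem_of_not_mem hbF' haF'
    refine ⟨b, hbF', fun h ↦ hbF (Finset.mem_erase.2 ⟨hba, h⟩), ?_⟩
    rwa [hb, exch_self (by omega)]

def polarMatroid (G : Set (Mon n)) (hG : G.Nonempty)
    (hexch : Matroid.ExchangeProperty (polarBases G)) : Matroid (Fin n × ℕ) :=
  Matroid.ofExistsFiniteIsBase univ (polarBases G)
    (hG.elim fun u hu ↦ ⟨_, polarBases_coe_iff.2 ((depolarize_polarize u).symm ▸ hu),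
      Finset.finite_toSet _⟩)
    hexch fun _ _ ↦ subset_univ _

variable {G : Set (Mon n)} {hG : G.Nonempty} {hexch : Matroid.ExchangeProperty (polarBases G)}

lemma polarMatroid_isBase_polarize {u : Mon n} (hu : u ∈ G) :
    (polarMatroid G hG hexch).IsBase ↑(polarize u) :=
  polarBases_coe_iff.2 ((depolarize_polarize u).symm ▸ hu)

lemma exch_mem_of_polarMatroid_isBase {u : Mon n} {x y : Fin n × ℕ} (hx : x ∈ polarize u)
    (hy : y ∉ polarize u)
    (h : (polarMatroid G hG hexch).IsBase (insert y (↑(polarize u) \ {x}))) :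
    exch u x.1 y.1 ∈ G := by
  rw [← Finset.coe_erase, ← Finset.coe_insert] at h
  simpa [depolarize_insert_erase hx hy] using polarBases_coe_iff.1 h

end Polarization

/-- Symmetric exchange property of polymatroidal ideals: for `u, v ∈ G(I)` with
`deg_{x_i}(v) > deg_{x_i}(u)` there is `j` with `deg_{x_j}(v) < deg_{x_j}(u)` such that
both `x_i(u/x_j)` and `x_j(v/x_i)` belong to `G(I)`. -/
theorem stmt_15 {n d : ℕ} (G : Set (Mon n)) (hdeg : ∀ u ∈ G, mdeg u = d)
    (hpoly : IsPolymatroidal G) :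
    ∀ u ∈ G, ∀ v ∈ G, ∀ i, u i < v i →
      ∃ j, v j < u j ∧ exch u j i ∈ G ∧ exch v i j ∈ G := by
  intro u hu v hv i hui
  let M := polarMatroid G ⟨u, hu⟩ (hpoly.exchangeProperty_polarBases hdeg)
  have hxv : (i, u i) ∈ polarize v := mem_polarize.2 hui
  have hxu : (i, u i) ∉ polarize u := by simp
  have hbase : ∀ w ∈ G, M.IsBase ↑(polarize w) := fun _ ↦ polarMatroid_isBase_polarize
  obtain ⟨y, ⟨hyu, hyv⟩, hv', hu'⟩ :=
    (hbase v hv).exists_symm_exchange (hbase u hu) ⟨hxv, hxu⟩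
  rw [Finset.mem_coe] at hyu hyv
  refine ⟨y.1, ?_, exch_mem_of_polarMatroid_isBase hyu hxu hu',
    exch_mem_of_polarMatroid_isBase hxv hyv hv'⟩
  rw [mem_polarize] at hyu hyv
  omega
end

section
/- Let I ⊂ K[x_1,x_2,x_3] be a monomial ideal generated in a single degree having linear quotients with respect to the reverse lexicographical ordering induced by every ordering of the variables. Let u, v ∈ G(I) with u : v = x_1^r x_3^s for some r,s > 0 (so v : u = x_2^t with t > 0). Then (u/x_1)x_2 ∈ G(I). -/
/-- In three variables, if `I` is generated in a single degree and has linear quotients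
with respect to the reverse lexicographic ordering induced by every ordering of the
variables, and `u, v ∈ G(I)` satisfy `u : v = x_1^r x_3^s` with `r, s > 0`
(so `v : u = x_2^t`, `t > 0`), then `(u/x_1)·x_2 ∈ G(I)`. -/
theorem stmt_16 {d : ℕ} (G : Set (Mon 3)) (hdeg : ∀ u ∈ G, mdeg u = d)
    (hLQ : ∀ σ : Fin 3 → Fin 3, Function.Bijective σ → LinQuot G (rlexGT σ))
    (u v : Mon 3) (hu : u ∈ G) (hv : v ∈ G)
    (h1 : v 0 < u 0) (h2 : u 1 ≤ v 1) (h3 : v 2 < u 2) :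
    exch u 0 1 ∈ G := by
  have hσ : Function.Bijective (![2,1,0] : Fin 3 → Fin 3) := by decide
  have hgt : rlexGT ![2,1,0] v u := by
    refine ⟨2, by simpa using h1, ?_⟩
    intro k hk
    fin_cases k <;> simp at hk
  obtain ⟨i, hi, w, hwG, hwgt, hwle⟩ := hLQ ![2,1,0] hσ u hu v hv hgt
  -- i must be 1
  have hdu : mdeg u = d := hdeg u hu
  have hdw : mdeg w = d := hdeg w hwG
  rw [mdeg, Fin.sum_univ_three] at hdu hdw
  have hb0 := hwle 0
  have hb1 := hwle 1
  have hb2 := hwle 2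
  obtain ⟨j, hj, hjeq⟩ := hwgt
  have hi1 : i = 1 := by fin_cases i <;> first | rfl | (simp at hi; omega)
  subst hi1
  simp at hb0 hb1 hb2
  have hw0 : w 0 = u 0 - 1 ∧ w 1 = u 1 + 1 ∧ w 2 = u 2 := by
    fin_cases j
    · simp at hj
      have e1 := hjeq 1 (by decide)
      have e2 := hjeq 2 (by decide)
      simp at e1 e2
      omega
    · simp at hj
      have e2 := hjeq 2 (by decide)
      simp at e2
      omega
    · simp at hj
      omega
  have : exch u 0 1 = w := by
    funext l
    fin_cases l <;> simp [exch] <;> omega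
  rw [this]
  exact hwG
end
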